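/- arXiv:2405.07181 — 9 statements merged into one kernel-verified Lean document; each statement's English description precedes it below -/
import Mathlib

section
/- Let R be a finite commutative ring with n elements and let U(R) denote its set of units. In the total graph T_Γ(R): (1) if 2 is not a unit of R, then every vertex x ∈ R has degree n − |U(R)| − 1; (2) if 2 is a unit of R, then every vertex x that is not a unit has degree n − |U(R)| − 1, and every vertex x that is a unit has degree n − |U(R)|. -/
open scoped Classical

/-- The total graph of a commutative ring `R`: distinct `x`, `y` are adjacent
iff `x + y` is not a unit of `R`. -/
def totalGraph (R : Type*) [CommRing R] : SimpleGraph R where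
  Adj x y := x ≠ y ∧ ¬ IsUnit (x + y)
  symm := ⟨fun x y ⟨h1, h2⟩ => ⟨h1.symm, by rwa [add_comm]⟩⟩
  loopless := ⟨fun x h => h.1 rfl⟩

/-- The unit graph of a commutative ring `R`: distinct `x`, `y` are adjacent
iff `x + y` is a unit of `R`. -/
def unitGraph (R : Type*) [CommRing R] : SimpleGraph R where
  Adj x y := x ≠ y ∧ IsUnit (x + y)
  symm := ⟨fun x y ⟨h1, h2⟩ => ⟨h1.symm, by rwa [add_comm]⟩⟩
  loopless := ⟨fun x h => h.1 rfl⟩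

/-- The Sombor index of a finite simple graph:
`SO(G) = ∑_{uv ∈ E(G)} √(deg u ^ 2 + deg v ^ 2)`. -/
noncomputable def somborIndex {V : Type*} [Fintype V] (G : SimpleGraph V) : ℝ :=
  ∑ e ∈ G.edgeFinset,
    Sym2.lift ⟨fun u v => Real.sqrt ((G.degree u : ℝ) ^ 2 + (G.degree v : ℝ) ^ 2),
      fun u v => by dsimp only; rw [add_comm]⟩ e

lemma card_isUnit_filter (R : Type*) [CommRing R] [Fintype R] :
    (Finset.univ.filter (fun a : R => IsUnit a)).card = Fintype.card Rˣ := by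
  rw [← Fintype.card_subtype]
  exact Fintype.card_congr
    (⟨fun a : {a : R // IsUnit a} => a.2.unit, fun u => ⟨(u : R), u.isUnit⟩,
      fun a => Subtype.ext a.2.unit_spec, fun u => Units.ext u.isUnit.unit_spec⟩)

lemma filter_nonunit_card (R : Type*) [CommRing R] [Fintype R] (x : R) :
    (Finset.univ.filter (fun y : R => ¬ IsUnit (x + y))).card =
      Fintype.card R - Fintype.card Rˣ := by
  have hb : (Finset.univ.filter (fun y : R => ¬ IsUnit (x + y))).card =
      (Finset.univ.filter (fun z : R => ¬ IsUnit z)).card := by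
    apply Finset.card_bij (fun y _ => x + y)
    · intro y hy
      simp only [Finset.mem_filter, Finset.mem_univ, true_and] at hy ⊢
      exact hy
    · intro a ha b hb h
      exact add_left_cancel h
    · intro z hz
      refine ⟨z - x, ?_, by ring⟩
      simp only [Finset.mem_filter, Finset.mem_univ, true_and] at hz ⊢
      rwa [add_sub_cancel]
  rw [hb, Finset.filter_not, Finset.card_sdiff_of_subset (Finset.filter_subset _ _),
    card_isUnit_filter, Finset.card_univ]

lemma nbr_eq (R : Type*) [CommRing R] [Fintype R] (x : R) :
    (totalGraph R).neighborFinset x =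
      (Finset.univ.filter (fun y : R => ¬ IsUnit (x + y))).erase x := by
  ext y
  rw [SimpleGraph.mem_neighborFinset]
  simp only [SimpleGraph.mem_neighborFinset, totalGraph, Finset.mem_erase,
    Finset.mem_filter, Finset.mem_univ, true_and]
  constructor
  · rintro ⟨h1, h2⟩; exact ⟨Ne.symm h1, h2⟩
  · rintro ⟨h1, h2⟩; exact ⟨Ne.symm h1, h2⟩

theorem total_graph_degrees (R : Type*) [CommRing R] [Fintype R] :
    (¬ IsUnit (2 : R) →
      ∀ x : R, (totalGraph R).degree x = Fintype.card R - Fintype.card Rˣ - 1) ∧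
    (IsUnit (2 : R) →
      (∀ x : R, ¬ IsUnit x →
        (totalGraph R).degree x = Fintype.card R - Fintype.card Rˣ - 1) ∧
      (∀ x : R, IsUnit x →
        (totalGraph R).degree x = Fintype.card R - Fintype.card Rˣ)) := by
  have hdeg : ∀ x : R, ¬ IsUnit (x + x) →
      (totalGraph R).degree x = Fintype.card R - Fintype.card Rˣ - 1 := by
    intro x hx
    rw [SimpleGraph.degree, nbr_eq, Finset.card_erase_of_mem (by
      simp only [Finset.mem_filter, Finset.mem_univ, true_and]; exact hx),
      filter_nonunit_card]
  refine ⟨fun h2 x => hdeg x ?_, fun h2 => ⟨fun x hx => hdeg x ?_, fun x hx => ?_⟩⟩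
  · intro h
    exact h2 (isUnit_of_mul_isUnit_left (by rwa [← two_mul] at h))
  · intro h
    exact hx (isUnit_of_mul_isUnit_right (by rwa [← two_mul] at h))
  · rw [SimpleGraph.degree, nbr_eq, Finset.erase_eq_of_notMem (by
      simp only [Finset.mem_filter, Finset.mem_univ, true_and, not_not]
      rw [← two_mul]; exact h2.mul hx), filter_nonunit_card]
end

section
/- Let R be a finite commutative ring and let U(R) denote its set of units. In the unit graph G(R): (1) if 2 is not a unit of R, then every vertex x ∈ R has degree |U(R)|; (2) if 2 is a unit of R, then every vertex x that is a unit has degree |U(R)| − 1, and every vertex x that is not a unit has degree |U(R)|. -/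
open scoped Classical

lemma card_units_eq_filter (R : Type*) [CommRing R] [Fintype R] :
    Fintype.card Rˣ = (Finset.univ.filter (fun u : R => IsUnit u)).card := by
  rw [← Fintype.card_subtype]
  exact Fintype.card_congr
    { toFun := fun u => ⟨(u : R), u.isUnit⟩
      invFun := fun u => u.2.unit
      left_inv := fun u => Units.ext rfl
      right_inv := fun u => rfl }

lemma degree_eq_erase (R : Type*) [CommRing R] [Fintype R] (x : R) :
    (unitGraph R).degree x
      = ((Finset.univ.filter (fun u : R => IsUnit u)).erase (x + x)).card := by
  rw [SimpleGraph.degree]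
  apply Finset.card_nbij (fun y => x + y)
  · intro y hy
    rw [Finset.mem_coe, SimpleGraph.mem_neighborFinset] at hy
    obtain ⟨hne, hu⟩ := hy
    refine Finset.mem_erase.2 ⟨fun h => hne ?_, Finset.mem_filter.2 ⟨Finset.mem_univ _, hu⟩⟩
    exact (add_left_cancel h).symm
  · intro a _ b _ h
    exact add_left_cancel h
  · intro u hu
    rw [Finset.mem_coe, Finset.mem_erase, Finset.mem_filter] at hu
    refine ⟨u - x, ?_, by ring⟩
    rw [Finset.mem_coe, SimpleGraph.mem_neighborFinset]
    show x ≠ u - x ∧ IsUnit (x + (u - x))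
    constructor
    · intro h
      apply hu.1
      have : u - x = x := h.symm
      linear_combination this
    · have : x + (u - x) = u := by ring
      rw [this]; exact hu.2.2

theorem unit_graph_degrees (R : Type*) [CommRing R] [Fintype R] :
    (¬ IsUnit (2 : R) →
      ∀ x : R, (unitGraph R).degree x = Fintype.card Rˣ) ∧
    (IsUnit (2 : R) →
      (∀ x : R, IsUnit x →
        (unitGraph R).degree x = Fintype.card Rˣ - 1) ∧
      (∀ x : R, ¬ IsUnit x →
        (unitGraph R).degree x = Fintype.card Rˣ)) := by
  have key : ∀ x : R, ¬ IsUnit (x + x) →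
      (unitGraph R).degree x = Fintype.card Rˣ := by
    intro x hx
    rw [degree_eq_erase, card_units_eq_filter]
    congr 1
    apply Finset.erase_eq_of_notMem
    simp [hx]
  refine ⟨fun h2 x => ?_, fun h2 => ⟨fun x hx => ?_, fun x hx => ?_⟩⟩
  · apply key
    intro h
    apply h2
    have : x + x = 2 * x := by ring
    rw [this] at h
    exact isUnit_of_mul_isUnit_left h
  · rw [degree_eq_erase, card_units_eq_filter]
    apply Finset.card_erase_of_mem
    have : x + x = 2 * x := by ring
    simp [this, h2.mul hx]
  · apply key
    intro h
    apply hx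
    have : x + x = 2 * x := by ring
    rw [this] at h
    exact isUnit_of_mul_isUnit_right h
end

section
/- Let n be a positive even integer. Then the Sombor index of the total graph of ℤ_n satisfies SO(T_Γ(ℤ_n)) = n(n − φ(n) − 1)²/√2, where φ is Euler's totient function. -/
open scoped Classical

lemma notUnit_add_self {n : ℕ} (hn : Even n) (x : ZMod n) : ¬ IsUnit (x + x) := by
  obtain ⟨k, hk⟩ := hn
  have h2 : (2 : ℕ) ∣ n := ⟨k, by omega⟩
  intro h
  have h' := h.map (ZMod.castHom h2 (ZMod 2))
  rw [map_add, CharTwo.add_self_eq_zero] at h'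
  exact (by decide : ¬ IsUnit (0 : ZMod 2)) h'

lemma card_isUnit_filter_s3 (n : ℕ) [NeZero n] :
    (Finset.univ.filter (fun z : ZMod n => IsUnit z)).card = Nat.totient n := by
  rw [← ZMod.card_units_eq_totient n, Fintype.card]
  exact (Finset.card_bij (fun (u : (ZMod n)ˣ) _ => (u : ZMod n))
    (fun u _ => Finset.mem_filter.2 ⟨Finset.mem_univ _, u.isUnit⟩)
    (fun u _ v _ h => Units.ext h)
    (fun z hz => ⟨((Finset.mem_filter.1 hz).2).unit, Finset.mem_univ _, rfl⟩)).symm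

lemma totalGraph_degree {n : ℕ} [NeZero n] (hn : Even n) (x : ZMod n) :
    (totalGraph (ZMod n)).degree x = n - Nat.totient n - 1 := by
  classical
  have hx : x + x ∈ Finset.univ.filter (fun z : ZMod n => ¬ IsUnit z) :=
    Finset.mem_filter.2 ⟨Finset.mem_univ _, notUnit_add_self hn x⟩
  have hcard : (totalGraph (ZMod n)).neighborFinset x
      = ((Finset.univ.filter (fun z : ZMod n => ¬ IsUnit z)).erase (x + x)).image
        (fun z => z - x) := by
    ext y
    rw [SimpleGraph.mem_neighborFinset]
    simp only [SimpleGraph.mem_neighborFinset, totalGraph, Finset.mem_image,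
      Finset.mem_erase, Finset.mem_filter, Finset.mem_univ, true_and]
    constructor
    · rintro ⟨hne, hu⟩
      exact ⟨x + y, ⟨fun h => hne (by
        have := add_left_cancel h; exact this.symm ▸ rfl), hu⟩, by ring⟩
    · rintro ⟨z, ⟨hz1, hz2⟩, rfl⟩
      constructor
      · intro h
        apply hz1
        have : z = x + (z - x) := by ring
        rw [this, ← h]
      · have : x + (z - x) = z := by ring
        rw [this]; exact hz2
  have himg : (((Finset.univ.filter (fun z : ZMod n => ¬ IsUnit z)).erase (x + x)).image
        (fun z => z - x)).card
      = ((Finset.univ.filter (fun z : ZMod n => ¬ IsUnit z)).erase (x + x)).card :=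
    Finset.card_image_of_injective _ (sub_left_injective)
  have hnon : (Finset.univ.filter (fun z : ZMod n => ¬ IsUnit z)).card
      = n - Nat.totient n := by
    have h1 := Finset.card_filter_add_card_filter_not
      (s := (Finset.univ : Finset (ZMod n))) (p := fun z : ZMod n => IsUnit z)
    rw [card_isUnit_filter_s3 n, Finset.card_univ, ZMod.card] at h1
    omega
  rw [SimpleGraph.degree, hcard, himg, Finset.card_erase_of_mem hx, hnon]

theorem sombor_total_graph_even (n : ℕ) [NeZero n] (hn : Even n) :
    somborIndex (totalGraph (ZMod n)) =
      (n : ℝ) * ((n : ℝ) - (Nat.totient n : ℝ) - 1) ^ 2 / Real.sqrt 2 := by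
  classical
  set d : ℕ := n - Nat.totient n - 1 with hd
  have hdeg : ∀ x, (totalGraph (ZMod n)).degree x = d := fun x => totalGraph_degree hn x
  have hterm : ∀ e ∈ (totalGraph (ZMod n)).edgeFinset,
      Sym2.lift ⟨fun u v => Real.sqrt (((totalGraph (ZMod n)).degree u : ℝ) ^ 2
          + ((totalGraph (ZMod n)).degree v : ℝ) ^ 2),
        fun u v => by dsimp only; rw [add_comm]⟩ e = (d : ℝ) * Real.sqrt 2 := by
    intro e _
    induction e using Sym2.ind with
    | _ u v =>
      rw [Sym2.lift_mk]
      dsimp only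
      rw [hdeg u, hdeg v]
      rw [show ((d : ℝ) ^ 2 + (d : ℝ) ^ 2) = (d : ℝ) ^ 2 * 2 by ring,
        Real.sqrt_mul (by positivity), Real.sqrt_sq (by positivity)]
  have hsum := SimpleGraph.sum_degrees_eq_twice_card_edges (totalGraph (ZMod n))
  simp only [hdeg, Finset.sum_const, Finset.card_univ, ZMod.card, smul_eq_mul] at hsum
  have hcardR : ((totalGraph (ZMod n)).edgeFinset.card : ℝ) = n * d / 2 := by
    have : (2 * (totalGraph (ZMod n)).edgeFinset.card : ℝ) = (n * d : ℝ) := by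
      exact_mod_cast congrArg (fun m : ℕ => (m : ℝ)) hsum.symm
    linarith
  have h2 : 2 ≤ n := by
    rcases hn with ⟨k, hk⟩
    have := NeZero.pos n
    omega
  have hdR : (d : ℝ) = (n : ℝ) - (Nat.totient n : ℝ) - 1 := by
    have ht : Nat.totient n < n := Nat.totient_lt n (by omega)
    rw [hd]
    push_cast [Nat.cast_sub (by omega : 1 ≤ n - Nat.totient n),
      Nat.cast_sub ht.le]
    ring
  rw [somborIndex, Finset.sum_congr rfl hterm, Finset.sum_const, nsmul_eq_mul, hcardR, ← hdR]
  have hs2 : Real.sqrt 2 * Real.sqrt 2 = 2 := Real.mul_self_sqrt (by norm_num)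
  have hs2pos : Real.sqrt 2 > 0 := Real.sqrt_pos.2 (by norm_num)
  field_simp
  linear_combination ((d : ℝ) ^ 2) * hs2
end

section
/- Let p < q be odd primes. Then the Sombor index of the total graph of ℤ_{pq} satisfies SO(T_Γ(ℤ_{pq})) = √2·α·(pq − φ(pq) − 1) + β·√((pq − φ(pq) − 1)² + (pq − φ(pq))²) + √2·(|E| − α − β)·(pq − φ(pq)), where α = (p(p−1) + q(q−1))/2, β = 2(p−1)(q−1), and |E| = (pq − 1)(p + q − 1)/2 is the number of edges of T_Γ(ℤ_{pq}). -/
open scoped Classical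

open Finset

lemma totalGraph_adj {R : Type*} [CommRing R] (x y : R) :
    (totalGraph R).Adj x y ↔ x ≠ y ∧ ¬ IsUnit (x + y) := Iff.rfl

/-- double counting: twice the sombor index is the sum over ordered adjacent pairs. -/
lemma two_mul_somborIndex {V : Type*} [Fintype V] (G : SimpleGraph V) :
    2 * somborIndex G =
      ∑ w ∈ (Finset.univ : Finset (V × V)).filter (fun w => G.Adj w.1 w.2),
        Real.sqrt ((G.degree w.1 : ℝ) ^ 2 + (G.degree w.2 : ℝ) ^ 2) := by
  set F : Sym2 V → ℝ := Sym2.lift ⟨fun u v => Real.sqrt ((G.degree u : ℝ) ^ 2 + (G.degree v : ℝ) ^ 2),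
      fun u v => by dsimp only; rw [add_comm]⟩ with hF
  have h1 : ∑ d : G.Dart, F d.edge = 2 * somborIndex G := by
    rw [← Finset.sum_fiberwise_of_maps_to
      (g := fun d : G.Dart => d.edge) (t := G.edgeFinset) (fun d _ => by
        rw [SimpleGraph.mem_edgeFinset]; exact d.edge_mem)]
    rw [somborIndex, Finset.mul_sum]
    refine Finset.sum_congr rfl fun e he => ?_
    have hcong : ∀ d ∈ Finset.univ.filter (fun d : G.Dart => d.edge = e), F d.edge = F e := by
      intro d hd
      simp only [Finset.mem_filter] at hd
      rw [hd.2]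
    have hc : (Finset.univ.filter (fun d : G.Dart => d.edge = e)).card = 2 := by
      simpa using G.dart_edge_fiber_card e (by rwa [← SimpleGraph.mem_edgeFinset])
    rw [Finset.sum_congr rfl hcong, Finset.sum_const, hc, nsmul_eq_mul]
    norm_num
    rfl
  rw [← h1]
  refine Finset.sum_bij' (i := fun d _ => (d.fst, d.snd))
    (j := fun w h => (⟨w, (Finset.mem_filter.1 h).2⟩ : G.Dart)) ?_ ?_ ?_ ?_ ?_
  · intro d _; simp [d.adj]
  · intro w h; simp
  · intro d _; rfl
  · intro w h; rfl
  · intro d _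
    show F s(d.fst, d.snd) = _
    rw [hF, Sym2.lift_mk]

lemma isUnit_two_zmod (n : ℕ) [NeZero n] (hn : Odd n) : IsUnit (2 : ZMod n) := by
  have h2 : ((2 : ℕ) : ZMod n) = 2 := by push_cast; ring
  rw [← h2, ZMod.isUnit_iff_coprime]
  rw [Nat.Prime.coprime_iff_not_dvd Nat.prime_two]
  intro hdvd
  exact (Nat.not_even_iff_odd.2 hn) (even_iff_two_dvd.2 hdvd)

lemma totalGraph_degree_aux (n : ℕ) [NeZero n] (x : ZMod n) :
    (totalGraph (ZMod n)).degree x =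
      ((Finset.univ : Finset (ZMod n)).filter fun z => z ≠ x + x ∧ ¬ IsUnit z).card := by
  rw [← SimpleGraph.card_neighborFinset_eq_degree, SimpleGraph.neighborFinset_eq_filter]
  refine Finset.card_nbij' (i := fun y => x + y) (j := fun z => z - x) ?_ ?_ ?_ ?_
  · intro y hy
    simp only [Finset.mem_coe, Finset.mem_filter, Finset.mem_univ, true_and, totalGraph_adj] at hy ⊢
    exact ⟨fun h => hy.1 (add_left_cancel h).symm, hy.2⟩
  · intro z hz
    simp only [Finset.mem_coe, Finset.mem_filter, Finset.mem_univ, true_and, totalGraph_adj] at hz ⊢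
    constructor
    · intro h; exact hz.1 (by linear_combination -h)
    · have : x + (z - x) = z := by ring
      rw [this]; exact hz.2
  · intro y _; simp
  · intro z _; simp

lemma totalGraph_degree_unit (n : ℕ) [NeZero n] (hn : Odd n) (x : ZMod n) (hx : IsUnit x) :
    (totalGraph (ZMod n)).degree x =
      ((Finset.univ : Finset (ZMod n)).filter fun z => ¬ IsUnit z).card := by
  rw [totalGraph_degree_aux]
  congr 1
  apply Finset.ext
  intro z
  simp only [Finset.mem_filter, Finset.mem_univ, true_and]
  constructor
  · exact fun h => h.2
  · intro h
    refine ⟨fun hz => h ?_, h⟩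
    rw [hz, ← two_mul]
    exact (isUnit_two_zmod n hn).mul hx

lemma totalGraph_degree_nonunit (n : ℕ) [NeZero n] (hn : Odd n) (x : ZMod n) (hx : ¬ IsUnit x) :
    (totalGraph (ZMod n)).degree x + 1 =
      ((Finset.univ : Finset (ZMod n)).filter fun z => ¬ IsUnit z).card := by
  have hxx : ¬ IsUnit (x + x) := by
    intro h
    rw [← two_mul] at h
    exact hx (isUnit_of_mul_isUnit_right h)
  have hmem : x + x ∈ (Finset.univ : Finset (ZMod n)).filter fun z => ¬ IsUnit z := by
    simp [hxx]
  have herase : ((Finset.univ : Finset (ZMod n)).filter fun z => z ≠ x + x ∧ ¬ IsUnit z) =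
      (((Finset.univ : Finset (ZMod n)).filter fun z => ¬ IsUnit z).erase (x + x)) := by
    apply Finset.ext
    intro z
    simp only [Finset.mem_filter, Finset.mem_univ, true_and, Finset.mem_erase]
  rw [totalGraph_degree_aux, herase, Finset.card_erase_of_mem hmem]
  have hpos : 0 < ((Finset.univ : Finset (ZMod n)).filter fun z => ¬ IsUnit z).card :=
    Finset.card_pos.2 ⟨x + x, hmem⟩
  omega

lemma prod_isUnit_iff {M N : Type*} [CommMonoid M] [CommMonoid N] (x : M × N) :
    IsUnit x ↔ IsUnit x.1 ∧ IsUnit x.2 := by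
  constructor
  · intro h
    exact ⟨h.map (MonoidHom.fst M N), h.map (MonoidHom.snd M N)⟩
  · rintro ⟨h1, h2⟩
    obtain ⟨a, ha⟩ := isUnit_iff_exists_inv.1 h1
    obtain ⟨b, hb⟩ := isUnit_iff_exists_inv.1 h2
    exact isUnit_iff_exists_inv.2 ⟨(a, b), Prod.ext ha hb⟩

lemma nonunit_prod_iff (p q : ℕ) [Fact p.Prime] [Fact q.Prime] (z : ZMod p × ZMod q) :
    ¬ IsUnit z ↔ z.1 = 0 ∨ z.2 = 0 := by
  rw [prod_isUnit_iff, isUnit_iff_ne_zero, isUnit_iff_ne_zero]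
  tauto

lemma diag_card (k : ℕ) [NeZero k] :
    ((Finset.univ : Finset (ZMod k × ZMod k)).filter fun v => v.1 = v.2).card = k := by
  have himg : ((Finset.univ : Finset (ZMod k × ZMod k)).filter fun v => v.1 = v.2) =
      Finset.univ.image (fun x : ZMod k => (x, x)) := by
    apply Finset.ext
    intro v
    simp only [Finset.mem_filter, Finset.mem_univ, true_and, Finset.mem_image, Prod.ext_iff]
    constructor
    · intro h; exact ⟨v.1, rfl, h⟩
    · rintro ⟨x, h1, h2⟩; rw [← h1, ← h2]
  rw [himg, Finset.card_image_of_injective _ (fun x y h => (Prod.ext_iff.1 h).1),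
    Finset.card_univ, ZMod.card]

lemma offdiag_card (k : ℕ) [NeZero k] :
    ((Finset.univ : Finset (ZMod k × ZMod k)).filter fun v => v.1 ≠ v.2).card + k = k * k := by
  have := Finset.card_filter_add_card_filter_not
    (s := (Finset.univ : Finset (ZMod k × ZMod k))) (p := fun v => v.1 = v.2)
  rw [_root_.diag_card] at this
  have hcard : (Finset.univ : Finset (ZMod k × ZMod k)).card = k * k := by
    rw [Finset.card_univ, Fintype.card_prod, ZMod.card]
  simp only [ne_eq]
  omega

lemma count_nn (p q : ℕ) [Fact p.Prime] [Fact q.Prime] (hne : p ≠ q) :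
    ((Finset.univ : Finset (ZMod (p * q) × ZMod (p * q))).filter fun w =>
      (totalGraph (ZMod (p * q))).Adj w.1 w.2 ∧ ¬ IsUnit w.1 ∧ ¬ IsUnit w.2).card + (p + q) =
      p * p + q * q := by
  have hp : p.Prime := Fact.out
  have hq : q.Prime := Fact.out
  have hcop : Nat.Coprime p q := (Nat.coprime_primes hp hq).2 hne
  haveI : NeZero (p * q) := ⟨Nat.mul_ne_zero hp.ne_zero hq.ne_zero⟩
  set e := ZMod.chineseRemainder hcop with he
  have hUe : ∀ a : ZMod (p * q), IsUnit (e a) ↔ IsUnit a := by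
    intro a
    constructor
    · intro h
      have := h.map e.symm.toRingHom
      simpa using this
    · intro h
      exact h.map e.toRingHom
  set T := ((Finset.univ : Finset ((ZMod p × ZMod q) × (ZMod p × ZMod q))).filter fun w =>
      (w.1 ≠ w.2 ∧ ¬ IsUnit (w.1 + w.2)) ∧ ¬ IsUnit w.1 ∧ ¬ IsUnit w.2) with hT
  have hcardT : ((Finset.univ : Finset (ZMod (p * q) × ZMod (p * q))).filter fun w =>
      (totalGraph (ZMod (p * q))).Adj w.1 w.2 ∧ ¬ IsUnit w.1 ∧ ¬ IsUnit w.2).card = T.card := by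
    refine Finset.card_nbij' (i := fun w => (e w.1, e w.2)) (j := fun w => (e.symm w.1, e.symm w.2))
      ?_ ?_ ?_ ?_
    · intro w hw
      simp only [Finset.mem_coe, Finset.mem_filter, Finset.mem_univ, true_and, totalGraph_adj, hT] at hw ⊢
      obtain ⟨⟨h1, h2⟩, h3, h4⟩ := hw
      refine ⟨⟨fun h => h1 (e.injective h), ?_⟩, fun h => h3 ((hUe _).1 h), fun h => h4 ((hUe _).1 h)⟩
      rw [← map_add]
      exact fun h => h2 ((hUe _).1 h)
    · intro w hw
      simp only [Finset.mem_coe, Finset.mem_filter, Finset.mem_univ, true_and, totalGraph_adj, hT] at hw ⊢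
      obtain ⟨⟨h1, h2⟩, h3, h4⟩ := hw
      refine ⟨⟨fun h => h1 (e.symm.injective h), fun h => h2 ?_⟩,
        fun h => h3 (by simpa using (hUe _).2 h), fun h => h4 (by simpa using (hUe _).2 h)⟩
      rw [← map_add] at h
      simpa using (hUe _).2 h
    · intro w _; simp
    · intro w _; simp
  rw [hcardT]
  set Tp := ((Finset.univ : Finset ((ZMod p × ZMod q) × (ZMod p × ZMod q))).filter fun w =>
      w.1.2 = 0 ∧ w.2.2 = 0 ∧ w.1.1 ≠ w.2.1) with hTp
  set Tq := ((Finset.univ : Finset ((ZMod p × ZMod q) × (ZMod p × ZMod q))).filter fun w =>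
      w.1.1 = 0 ∧ w.2.1 = 0 ∧ w.1.2 ≠ w.2.2) with hTq
  have hunion : T = Tp ∪ Tq := by
    apply Finset.ext
    rintro ⟨⟨a, b⟩, ⟨c, d⟩⟩
    simp only [hT, hTp, hTq, Finset.mem_filter, Finset.mem_univ, true_and, Finset.mem_union,
      nonunit_prod_iff, Prod.mk.injEq, Prod.mk_add_mk, Prod.ext_iff]
    constructor
    · rintro ⟨⟨hne', hsum⟩, h1, h2⟩
      rcases h1 with h1 | h1 <;> rcases h2 with h2 | h2 <;> rcases hsum with h3 | h3 <;>
        subst h1 <;> subst h2 <;> simp_all [Prod.ext_iff] <;> tauto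
    · rintro (⟨hb, hd, hac⟩ | ⟨ha, hc, hbd⟩)
      · subst hb; subst hd
        refine ⟨⟨?_, ?_⟩, ?_, ?_⟩ <;> simp [hac]
      · subst ha; subst hc
        refine ⟨⟨?_, ?_⟩, ?_, ?_⟩ <;> simp [hbd]
  have hdisj : Disjoint Tp Tq := by
    rw [Finset.disjoint_left]
    intro w hw1 hw2
    simp only [hTp, hTq, Finset.mem_filter] at hw1 hw2
    exact hw1.2.2.2 (hw2.2.1.trans hw2.2.2.1.symm)
  have hcardTp : Tp.card + p = p * p := by
    have hb : Tp.card = ((Finset.univ : Finset (ZMod p × ZMod p)).filter fun v =>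
        v.1 ≠ v.2).card := by
      refine Finset.card_nbij' (i := fun w => (w.1.1, w.2.1))
        (j := fun v => ((v.1, 0), (v.2, 0))) ?_ ?_ ?_ ?_
      · rintro ⟨⟨a, b⟩, ⟨c, d⟩⟩ hw
        simp only [hTp, Finset.mem_coe, Finset.mem_filter, Finset.mem_univ, true_and] at hw ⊢
        exact hw.2.2
      · rintro ⟨x, y⟩ hv
        simp only [hTp, Finset.mem_filter, Finset.mem_univ, true_and] at hv ⊢
        simpa using hv
      · rintro ⟨⟨a, b⟩, ⟨c, d⟩⟩ hw
        simp only [hTp, Finset.mem_coe, Finset.mem_filter, Finset.mem_univ, true_and] at hw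
        obtain ⟨h1, h2, _⟩ := hw
        subst h1; subst h2; rfl
      · rintro ⟨x, y⟩ _; rfl
    rw [hb]
    exact offdiag_card p
  have hcardTq : Tq.card + q = q * q := by
    have hb : Tq.card = ((Finset.univ : Finset (ZMod q × ZMod q)).filter fun v =>
        v.1 ≠ v.2).card := by
      refine Finset.card_nbij' (i := fun w => (w.1.2, w.2.2))
        (j := fun v => ((0, v.1), (0, v.2))) ?_ ?_ ?_ ?_
      · rintro ⟨⟨a, b⟩, ⟨c, d⟩⟩ hw
        simp only [hTq, Finset.mem_coe, Finset.mem_filter, Finset.mem_univ, true_and] at hw ⊢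
        exact hw.2.2
      · rintro ⟨x, y⟩ hv
        simp only [hTq, Finset.mem_filter, Finset.mem_univ, true_and] at hv ⊢
        simpa using hv
      · rintro ⟨⟨a, b⟩, ⟨c, d⟩⟩ hw
        simp only [hTq, Finset.mem_coe, Finset.mem_filter, Finset.mem_univ, true_and] at hw
        obtain ⟨h1, h2, _⟩ := hw
        subst h1; subst h2; rfl
      · rintro ⟨x, y⟩ _; rfl
    rw [hb]
    exact offdiag_card q
  rw [hunion, Finset.card_union_of_disjoint hdisj]
  have h1 := hcardTp
  have h2 := hcardTq
  omega

lemma units_filter_card (n : ℕ) [NeZero n] :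
    ((Finset.univ : Finset (ZMod n)).filter fun z => IsUnit z).card = n.totient := by
  rw [← ZMod.card_units_eq_totient n]
  have himg : (Finset.univ : Finset (ZMod n)ˣ).image (Units.val) =
      (Finset.univ : Finset (ZMod n)).filter fun z => IsUnit z := by
    apply Finset.ext
    intro z
    simp only [Finset.mem_image, Finset.mem_univ, true_and, Finset.mem_filter]
    exact ⟨fun ⟨u, hu⟩ => ⟨u, hu⟩, fun h => h⟩
  rw [← himg, Finset.card_image_of_injective _ Units.val_injective, Finset.card_univ]

lemma pair_fiber_card {V : Type*} [Fintype V] (G : SimpleGraph V) (x : V) :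
    (((Finset.univ : Finset (V × V)).filter fun w => G.Adj w.1 w.2).filter
      fun w => w.1 = x).card = G.degree x := by
  rw [← SimpleGraph.card_neighborFinset_eq_degree]
  refine Finset.card_nbij' (i := fun w => w.2) (j := fun y => (x, y)) ?_ ?_ ?_ ?_
  · rintro ⟨a, b⟩ hw
    simp only [Finset.mem_coe, Finset.mem_filter, Finset.mem_univ, true_and] at hw
    obtain ⟨h1, h2⟩ := hw
    subst h2
    simpa [SimpleGraph.mem_neighborFinset] using h1
  · intro y hy
    simp only [Finset.mem_filter, Finset.mem_univ, true_and, and_true]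
    simpa [SimpleGraph.mem_neighborFinset] using hy
  · rintro ⟨a, b⟩ hw
    simp only [Finset.mem_coe, Finset.mem_filter, Finset.mem_univ, true_and] at hw
    rw [← hw.2]
  · intro y _; rfl

set_option maxHeartbeats 1600000 in
theorem sombor_total_graph_pq (p q : ℕ) [Fact p.Prime] [Fact q.Prime]
    (hp : Odd p) (hq : Odd q) (hpq : p < q) :
    let A : ℝ := ((p : ℝ) * ((p : ℝ) - 1) + (q : ℝ) * ((q : ℝ) - 1)) / 2
    let B : ℝ := 2 * ((p : ℝ) - 1) * ((q : ℝ) - 1)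
    let E : ℝ := ((totalGraph (ZMod (p * q))).edgeFinset.card : ℝ)
    E = ((p : ℝ) * (q : ℝ) - 1) * ((p : ℝ) + (q : ℝ) - 1) / 2 ∧
    somborIndex (totalGraph (ZMod (p * q))) =
      Real.sqrt 2 * A * ((p : ℝ) * (q : ℝ) - (Nat.totient (p * q) : ℝ) - 1) +
        B * Real.sqrt (((p : ℝ) * (q : ℝ) - (Nat.totient (p * q) : ℝ) - 1) ^ 2 +
          ((p : ℝ) * (q : ℝ) - (Nat.totient (p * q) : ℝ)) ^ 2) +
        Real.sqrt 2 * (E - A - B) * ((p : ℝ) * (q : ℝ) - (Nat.totient (p * q) : ℝ)) := by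
  have hpp : p.Prime := Fact.out
  have hqp : q.Prime := Fact.out
  haveI : NeZero (p * q) := ⟨Nat.mul_ne_zero hpp.ne_zero hqp.ne_zero⟩
  haveI : Fact (1 < p * q) :=
    ⟨lt_of_lt_of_le hpp.one_lt (Nat.le_mul_of_pos_right p hqp.pos)⟩
  have hoddn : Odd (p * q) := hp.mul hq
  have hp1 : 1 ≤ p := hpp.one_lt.le
  have hq1 : 1 ≤ q := hqp.one_lt.le
  intro A B E
  have hA : A = ((p : ℝ) * ((p : ℝ) - 1) + (q : ℝ) * ((q : ℝ) - 1)) / 2 := rfl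
  have hB : B = 2 * ((p : ℝ) - 1) * ((q : ℝ) - 1) := rfl
  set G := totalGraph (ZMod (p * q)) with hG
  have hE : E = ((G.edgeFinset.card : ℕ) : ℝ) := rfl
  set D := ((Finset.univ : Finset (ZMod (p * q) × ZMod (p * q))).filter
    fun w => G.Adj w.1 w.2) with hD
  set c := ((Finset.univ : Finset (ZMod (p * q))).filter fun z => ¬ IsUnit z).card with hc
  set u := ((Finset.univ : Finset (ZMod (p * q))).filter fun z => IsUnit z).card with hu
  have htot : (p * q).totient = (p - 1) * (q - 1) := by
    rw [Nat.totient_mul ((Nat.coprime_primes hpp hqp).2 hpq.ne), Nat.totient_prime hpp,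
      Nat.totient_prime hqp]
  have hcu : u + c = p * q := by
    have h := Finset.card_filter_add_card_filter_not
      (s := (Finset.univ : Finset (ZMod (p * q)))) (p := fun z => IsUnit z)
    rwa [Finset.card_univ, ZMod.card] at h
  have huval : u = (p * q).totient := units_filter_card _
  have hdegU : ∀ x : ZMod (p * q), IsUnit x → G.degree x = c := fun x hx =>
    totalGraph_degree_unit _ hoddn x hx
  have hdegN : ∀ x : ZMod (p * q), ¬ IsUnit x → G.degree x + 1 = c := fun x hx =>
    totalGraph_degree_nonunit _ hoddn x hx
  have hc1 : 1 ≤ c := by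
    have h0 : ¬ IsUnit (0 : ZMod (p * q)) := not_isUnit_zero
    have hmem : (0 : ZMod (p * q)) ∈ (Finset.univ : Finset (ZMod (p * q))).filter
        fun z => ¬ IsUnit z := by simp [h0]
    rw [hc]
    exact Finset.card_pos.2 ⟨_, hmem⟩
  have hDcard : D.card = 2 * G.edgeFinset.card := by
    rw [SimpleGraph.two_mul_card_edgeFinset]
  have hfib : ∀ P : ZMod (p * q) → Prop, (D.filter fun w => P w.1).card =
      ∑ x ∈ Finset.univ.filter (fun x => P x), G.degree x := by
    intro P
    rw [Finset.card_eq_sum_card_fiberwise (f := Prod.fst)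
      (t := Finset.univ.filter fun x => P x) (fun w hw => by
        simp only [Finset.mem_coe, Finset.mem_filter] at hw ⊢
        exact ⟨Finset.mem_univ _, hw.2⟩)]
    refine Finset.sum_congr rfl fun x hx => ?_
    simp only [Finset.mem_filter, Finset.mem_univ, true_and] at hx
    rw [← pair_fiber_card G x]
    congr 1
    apply Finset.ext; intro w
    simp only [hD, Finset.mem_filter, Finset.mem_univ, true_and]
    constructor
    · rintro ⟨⟨h1, _⟩, h3⟩; exact ⟨h1, h3⟩
    · rintro ⟨h1, h3⟩; exact ⟨⟨h1, h3 ▸ hx⟩, h3⟩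
  have hDnval : (D.filter fun w => ¬ IsUnit w.1).card + c = c * c := by
    have hfibN : (D.filter fun w => ¬ IsUnit w.1).card =
        ∑ x ∈ Finset.univ.filter (fun x : ZMod (p * q) => ¬ IsUnit x), G.degree x :=
      by convert hfib (fun x => ¬ IsUnit x) using 3 <;> exact (Finset.filter_congr_decidable _ _ _).symm
    rw [hfibN]
    have h1 : ∑ x ∈ Finset.univ.filter (fun x : ZMod (p * q) => ¬ IsUnit x),
        (G.degree x + 1) = c * c := by
      rw [Finset.sum_congr rfl (fun x hx => by
        rw [hdegN x (Finset.mem_filter.1 hx).2]), Finset.sum_const, ← hc, smul_eq_mul]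
    rw [Finset.sum_add_distrib, Finset.sum_const, ← hc, smul_eq_mul, mul_one] at h1
    exact h1
  have hDuval : (D.filter fun w => IsUnit w.1).card = u * c := by
    have hfibU : (D.filter fun w => IsUnit w.1).card =
        ∑ x ∈ Finset.univ.filter (fun x : ZMod (p * q) => IsUnit x), G.degree x :=
      by convert hfib (fun x => IsUnit x) using 3 <;> exact (Finset.filter_congr_decidable _ _ _).symm
    rw [hfibU]
    rw [Finset.sum_congr rfl (fun x hx => hdegU x (Finset.mem_filter.1 hx).2),
      Finset.sum_const, ← hu, smul_eq_mul]
  have hsplit1 : (D.filter fun w => IsUnit w.1).card +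
      (D.filter fun w => ¬ IsUnit w.1).card = D.card := by
    have h := Finset.card_filter_add_card_filter_not (s := D)
      (p := fun w : ZMod (p * q) × ZMod (p * q) => IsUnit w.1)
    convert h using 3
  have hsplit2 : ((D.filter fun w => ¬ IsUnit w.1).filter fun w => IsUnit w.2).card +
      ((D.filter fun w => ¬ IsUnit w.1).filter fun w => ¬ IsUnit w.2).card =
      (D.filter fun w => ¬ IsUnit w.1).card := by
    have h := Finset.card_filter_add_card_filter_not
      (s := D.filter fun w => ¬ IsUnit w.1)
      (p := fun w : ZMod (p * q) × ZMod (p * q) => IsUnit w.2)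
    convert h using 3
  have hsplit3 : ((D.filter fun w => IsUnit w.1).filter fun w => IsUnit w.2).card +
      ((D.filter fun w => IsUnit w.1).filter fun w => ¬ IsUnit w.2).card =
      (D.filter fun w => IsUnit w.1).card := by
    have h := Finset.card_filter_add_card_filter_not
      (s := D.filter fun w => IsUnit w.1)
      (p := fun w : ZMod (p * q) × ZMod (p * q) => IsUnit w.2)
    convert h using 3
  have hswap : ((D.filter fun w => ¬ IsUnit w.1).filter fun w => IsUnit w.2).card =
      ((D.filter fun w => IsUnit w.1).filter fun w => ¬ IsUnit w.2).card := by
    refine Finset.card_nbij' (i := Prod.swap) (j := Prod.swap) ?_ ?_ ?_ ?_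
    · intro w hw
      simp only [hD, Finset.mem_coe, Finset.mem_filter, Finset.mem_univ, true_and, Prod.fst_swap,
        Prod.snd_swap] at hw ⊢
      exact ⟨⟨G.symm.symm _ _ hw.1.1, hw.2⟩, hw.1.2⟩
    · intro w hw
      simp only [hD, Finset.mem_coe, Finset.mem_filter, Finset.mem_univ, true_and, Prod.fst_swap,
        Prod.snd_swap] at hw ⊢
      exact ⟨⟨G.symm.symm _ _ hw.1.1, hw.2⟩, hw.1.2⟩
    · intro w _; simp
    · intro w _; simp
  have hnnlink : ((D.filter fun w => ¬ IsUnit w.1).filter fun w => ¬ IsUnit w.2) =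
      ((Finset.univ : Finset (ZMod (p * q) × ZMod (p * q))).filter
        fun w => G.Adj w.1 w.2 ∧ ¬ IsUnit w.1 ∧ ¬ IsUnit w.2) := by
    apply Finset.ext; intro w
    simp only [hD, Finset.mem_filter, Finset.mem_univ, true_and]
    exact and_assoc
  have hKnat : ((D.filter fun w => ¬ IsUnit w.1).filter fun w => ¬ IsUnit w.2).card
      + (p + q) = p * p + q * q := by
    rw [hnnlink]
    exact count_nn p q hpq.ne
  -- real-number versions
  have htotR : (((p * q).totient : ℕ) : ℝ) = ((p : ℝ) - 1) * ((q : ℝ) - 1) := by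
    rw [htot, Nat.cast_mul, Nat.cast_sub hp1, Nat.cast_sub hq1, Nat.cast_one]
  have hcR : ((c : ℕ) : ℝ) = (p : ℝ) * (q : ℝ) - (((p * q).totient : ℕ) : ℝ) := by
    have h1 : ((u : ℕ) : ℝ) + ((c : ℕ) : ℝ) = (p : ℝ) * (q : ℝ) := by
      exact_mod_cast congrArg (Nat.cast : ℕ → ℝ) hcu
    have h2 : ((u : ℕ) : ℝ) = (((p * q).totient : ℕ) : ℝ) := by exact_mod_cast huval
    linarith
  have hcR' : ((c : ℕ) : ℝ) = (p : ℝ) + (q : ℝ) - 1 := by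
    rw [hcR, htotR]; ring
  have huR : ((u : ℕ) : ℝ) = ((p : ℝ) - 1) * ((q : ℝ) - 1) := by
    rw [show ((u : ℕ) : ℝ) = (((p * q).totient : ℕ) : ℝ) from by exact_mod_cast huval, htotR]
  have hDuR : (((D.filter fun w => IsUnit w.1).card : ℕ) : ℝ) =
      ((p : ℝ) - 1) * ((q : ℝ) - 1) * ((p : ℝ) + (q : ℝ) - 1) := by
    rw [hDuval, Nat.cast_mul, huR, hcR']
  have hDnR : (((D.filter fun w => ¬ IsUnit w.1).card : ℕ) : ℝ) =
      ((p : ℝ) + (q : ℝ) - 1) * ((p : ℝ) + (q : ℝ) - 1) - ((p : ℝ) + (q : ℝ) - 1) := by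
    have h1 : (((D.filter fun w => ¬ IsUnit w.1).card : ℕ) : ℝ) + ((c : ℕ) : ℝ) =
        ((c : ℕ) : ℝ) * ((c : ℕ) : ℝ) := by exact_mod_cast congrArg (Nat.cast : ℕ → ℝ) hDnval
    rw [hcR'] at h1
    linarith
  have hEval : E = ((p : ℝ) * (q : ℝ) - 1) * ((p : ℝ) + (q : ℝ) - 1) / 2 := by
    have h3 : ((D.card : ℕ) : ℝ) = 2 * E := by
      rw [hDcard, hE]; push_cast; ring
    have h4 : (((D.filter fun w => IsUnit w.1).card : ℕ) : ℝ) +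
        (((D.filter fun w => ¬ IsUnit w.1).card : ℕ) : ℝ) = ((D.card : ℕ) : ℝ) := by
      exact_mod_cast congrArg (Nat.cast : ℕ → ℝ) hsplit1
    rw [hDuR, hDnR] at h4
    rw [h3] at h4
    linarith
  refine ⟨hEval, ?_⟩
  -- the Sombor computation
  have hdegUR : ∀ x : ZMod (p * q), IsUnit x → (G.degree x : ℝ) = ((c : ℕ) : ℝ) := by
    intro x hx; exact_mod_cast congrArg (Nat.cast : ℕ → ℝ) (hdegU x hx)
  have hdegNR : ∀ x : ZMod (p * q), ¬ IsUnit x → (G.degree x : ℝ) = ((c : ℕ) : ℝ) - 1 := by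
    intro x hx
    have := congrArg (Nat.cast : ℕ → ℝ) (hdegN x hx)
    push_cast at this
    linarith
  have hcm1 : (0 : ℝ) ≤ ((c : ℕ) : ℝ) - 1 := by
    have : (1 : ℝ) ≤ ((c : ℕ) : ℝ) := by exact_mod_cast hc1
    linarith
  have hsqq : Real.sqrt (((c : ℕ) : ℝ) ^ 2 + ((c : ℕ) : ℝ) ^ 2) =
      Real.sqrt 2 * ((c : ℕ) : ℝ) := by
    rw [show ((c : ℕ) : ℝ) ^ 2 + ((c : ℕ) : ℝ) ^ 2 = 2 * ((c : ℕ) : ℝ) ^ 2 by ring,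
      Real.sqrt_mul (by norm_num), Real.sqrt_sq (Nat.cast_nonneg c)]
  have hsmm : Real.sqrt ((((c : ℕ) : ℝ) - 1) ^ 2 + (((c : ℕ) : ℝ) - 1) ^ 2) =
      Real.sqrt 2 * (((c : ℕ) : ℝ) - 1) := by
    rw [show (((c : ℕ) : ℝ) - 1) ^ 2 + (((c : ℕ) : ℝ) - 1) ^ 2 =
      2 * (((c : ℕ) : ℝ) - 1) ^ 2 by ring, Real.sqrt_mul (by norm_num), Real.sqrt_sq hcm1]
  have h2S := two_mul_somborIndex G
  rw [← Finset.sum_filter_add_sum_filter_not D (fun w => IsUnit w.1),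
    ← Finset.sum_filter_add_sum_filter_not (D.filter fun w => IsUnit w.1)
      (fun w => IsUnit w.2),
    ← Finset.sum_filter_add_sum_filter_not (D.filter fun w => ¬ IsUnit w.1)
      (fun w => IsUnit w.2)] at h2S
  have hsum_uu : ∑ w ∈ (D.filter fun w => IsUnit w.1).filter (fun w => IsUnit w.2),
      Real.sqrt ((G.degree w.1 : ℝ) ^ 2 + (G.degree w.2 : ℝ) ^ 2) =
      ((((D.filter fun w => IsUnit w.1).filter (fun w => IsUnit w.2)).card : ℕ) : ℝ) *
        (Real.sqrt 2 * ((c : ℕ) : ℝ)) := by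
    rw [Finset.sum_congr rfl (fun w hw => by
      have h2 := (Finset.mem_filter.1 hw).2
      have h1 := (Finset.mem_filter.1 (Finset.mem_filter.1 hw).1).2
      rw [hdegUR _ h1, hdegUR _ h2, hsqq]), Finset.sum_const, nsmul_eq_mul]
  have hsum_un : ∑ w ∈ (D.filter fun w => IsUnit w.1).filter (fun w => ¬ IsUnit w.2),
      Real.sqrt ((G.degree w.1 : ℝ) ^ 2 + (G.degree w.2 : ℝ) ^ 2) =
      ((((D.filter fun w => IsUnit w.1).filter (fun w => ¬ IsUnit w.2)).card : ℕ) : ℝ) *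
        Real.sqrt (((c : ℕ) : ℝ) ^ 2 + (((c : ℕ) : ℝ) - 1) ^ 2) := by
    rw [Finset.sum_congr rfl (fun w hw => by
      have h2 := (Finset.mem_filter.1 hw).2
      have h1 := (Finset.mem_filter.1 (Finset.mem_filter.1 hw).1).2
      rw [hdegUR _ h1, hdegNR _ h2]), Finset.sum_const, nsmul_eq_mul]
  have hsum_nu : ∑ w ∈ (D.filter fun w => ¬ IsUnit w.1).filter (fun w => IsUnit w.2),
      Real.sqrt ((G.degree w.1 : ℝ) ^ 2 + (G.degree w.2 : ℝ) ^ 2) =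
      ((((D.filter fun w => ¬ IsUnit w.1).filter (fun w => IsUnit w.2)).card : ℕ) : ℝ) *
        Real.sqrt ((((c : ℕ) : ℝ) - 1) ^ 2 + ((c : ℕ) : ℝ) ^ 2) := by
    rw [Finset.sum_congr rfl (fun w hw => by
      have h2 := (Finset.mem_filter.1 hw).2
      have h1 := (Finset.mem_filter.1 (Finset.mem_filter.1 hw).1).2
      rw [hdegNR _ h1, hdegUR _ h2]), Finset.sum_const, nsmul_eq_mul]
  have hsum_nn : ∑ w ∈ (D.filter fun w => ¬ IsUnit w.1).filter (fun w => ¬ IsUnit w.2),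
      Real.sqrt ((G.degree w.1 : ℝ) ^ 2 + (G.degree w.2 : ℝ) ^ 2) =
      ((((D.filter fun w => ¬ IsUnit w.1).filter (fun w => ¬ IsUnit w.2)).card : ℕ) : ℝ) *
        (Real.sqrt 2 * (((c : ℕ) : ℝ) - 1)) := by
    rw [Finset.sum_congr rfl (fun w hw => by
      have h2 := (Finset.mem_filter.1 hw).2
      have h1 := (Finset.mem_filter.1 (Finset.mem_filter.1 hw).1).2
      rw [hdegNR _ h1, hdegNR _ h2, hsmm]), Finset.sum_const, nsmul_eq_mul]
  rw [hsum_uu, hsum_un, hsum_nu, hsum_nn] at h2S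
  -- identify the two mixed square roots
  rw [show ((c : ℕ) : ℝ) ^ 2 + (((c : ℕ) : ℝ) - 1) ^ 2 =
    (((c : ℕ) : ℝ) - 1) ^ 2 + ((c : ℕ) : ℝ) ^ 2 by ring] at h2S
  -- real values of the four cardinalities
  have hKR : ((((D.filter fun w => ¬ IsUnit w.1).filter fun w => ¬ IsUnit w.2).card : ℕ) : ℝ) =
      (p : ℝ) * ((p : ℝ) - 1) + (q : ℝ) * ((q : ℝ) - 1) := by
    have h1 := congrArg (Nat.cast : ℕ → ℝ) hKnat
    push_cast at h1
    linarith
  have hNUR : ((((D.filter fun w => ¬ IsUnit w.1).filter fun w => IsUnit w.2).card : ℕ) : ℝ) =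
      2 * ((p : ℝ) - 1) * ((q : ℝ) - 1) := by
    have h1 := congrArg (Nat.cast : ℕ → ℝ) hsplit2
    push_cast at h1
    rw [hKR] at h1
    rw [hDnR] at h1
    linarith
  have hUNR : ((((D.filter fun w => IsUnit w.1).filter fun w => ¬ IsUnit w.2).card : ℕ) : ℝ) =
      2 * ((p : ℝ) - 1) * ((q : ℝ) - 1) := by
    rw [← hswap]; exact hNUR
  have hUUR : ((((D.filter fun w => IsUnit w.1).filter fun w => IsUnit w.2).card : ℕ) : ℝ) =
      ((p : ℝ) - 1) * ((q : ℝ) - 1) * ((p : ℝ) + (q : ℝ) - 1) -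
        2 * ((p : ℝ) - 1) * ((q : ℝ) - 1) := by
    have h1 := congrArg (Nat.cast : ℕ → ℝ) hsplit3
    push_cast at h1
    rw [hUNR, hDuR] at h1
    linarith
  rw [hKR, hNUR, hUNR, hUUR, hcR'] at h2S
  -- now rewrite the goal
  rw [show (p : ℝ) * (q : ℝ) - (((p * q).totient : ℕ) : ℝ) = ((c : ℕ) : ℝ) from hcR.symm,
    hA, hB, hEval, hcR']
  linarith [h2S]
end

section
/- Let p < q be odd primes. Then the Sombor index of the total graph of ℤ_{p²q} satisfies SO(T_Γ(ℤ_{p²q})) = √2·α·(p²q − φ(p²q) − 1) + β·√((p²q − φ(p²q) − 1)² + (p²q − φ(p²q))²) + √2·(|E| − α − β)·(p²q − φ(p²q)), where α = p(q−1)(p(q−1) − 1)/2 + p(p−1)(p(p−1) − 1)/2 + p(p−1)/2 + p²(q−1) + p²(p−1), β = 2p²(p−1)(q−1), and |E| = p(p + q − 1)(p²q − 1)/2 is the number of edges of T_Γ(ℤ_{p²q}). -/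
open scoped Classical

section auxCount
open Finset
variable {n : ℕ} [NeZero n]

lemma zmod_natCast_val' (x : ZMod n) : ((x.val : ℕ) : ZMod n) = x := by
  rw [ZMod.natCast_val, ZMod.cast_id]

lemma zmod_isUnit_iff' (x : ZMod n) : IsUnit x ↔ Nat.Coprime x.val n := by
  rw [← ZMod.isUnit_iff_coprime, zmod_natCast_val']

lemma range_filter_dvd_card' {d : ℕ} (hd : d ∣ n) :
    ((Finset.range n).filter (fun k => d ∣ k)).card = n / d := by
  have hd0 : d ≠ 0 := by rintro rfl; exact (NeZero.ne n) (zero_dvd_iff.mp hd)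
  have himg : (Finset.range (n / d)).image (fun m => d * m)
      = (Finset.range n).filter (fun k => d ∣ k) := by
    ext k
    simp only [mem_image, mem_range, mem_filter]
    constructor
    · rintro ⟨m, hm, rfl⟩
      exact ⟨(Nat.lt_div_iff_mul_lt' hd m).mp hm, ⟨m, rfl⟩⟩
    · rintro ⟨hk, ⟨m, rfl⟩⟩
      exact ⟨m, (Nat.lt_div_iff_mul_lt' hd m).mpr hk, rfl⟩
  rw [← himg, Finset.card_image_of_injective _ (mul_right_injective₀ hd0), Finset.card_range]

lemma card_val_dvd' {d : ℕ} (hd : d ∣ n) :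
    (Finset.univ.filter (fun x : ZMod n => d ∣ x.val)).card = n / d := by
  rw [← range_filter_dvd_card' hd]
  apply Finset.card_bij (fun x _ => x.val)
  · intro x hx
    simp only [mem_filter, mem_range] at hx ⊢
    exact ⟨ZMod.val_lt x, hx.2⟩
  · intro x _ y _ h
    exact ZMod.val_injective n h
  · intro k hk
    simp only [mem_filter, mem_range] at hk
    refine ⟨(k : ZMod n), ?_, by rw [ZMod.val_cast_of_lt hk.1]⟩
    simp only [mem_filter, mem_univ, true_and, ZMod.val_cast_of_lt hk.1]
    exact hk.2

lemma dvd_val_add_iff' {d : ℕ} (hd : d ∣ n) (x y : ZMod n) :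
    d ∣ (x + y).val ↔ d ∣ (x.val + y.val) := by
  rw [ZMod.val_add, Nat.dvd_mod_iff hd]

end auxCount

lemma two_mul_sum_edgeFinset {V : Type*} [Fintype V] (G : SimpleGraph V)
    (f : V → V → ℝ) (hf : ∀ u v, f u v = f v u) :
    2 * ∑ e ∈ G.edgeFinset,
        Sym2.lift ⟨f, fun u v => by rw [hf]⟩ e
      = ∑ xy ∈ Finset.univ.filter (fun xy : V × V => G.Adj xy.1 xy.2), f xy.1 xy.2 := by
  classical
  set F : Sym2 V → ℝ := Sym2.lift ⟨f, fun u v => by rw [hf]⟩ with hF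
  have hdart : ∑ d : G.Dart, F d.edge
      = ∑ xy ∈ Finset.univ.filter (fun xy : V × V => G.Adj xy.1 xy.2), f xy.1 xy.2 := by
    refine Finset.sum_bij' (fun d _ => (d.fst, d.snd))
      (fun xy h => ⟨xy, (Finset.mem_filter.mp h).2⟩) ?_ ?_ ?_ ?_ ?_
    · intro d _; simp [d.adj]
    · intro xy h; simp
    · intro d _; rfl
    · intro xy h; rfl
    · intro d _
      show Sym2.lift _ s(d.toProd.1, d.toProd.2) = _
      rw [Sym2.lift_mk]
  rw [← hdart]
  rw [← Finset.sum_fiberwise_of_maps_to (g := SimpleGraph.Dart.edge)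
        (t := G.edgeFinset) (s := Finset.univ)
        (fun d _ => by simp [SimpleGraph.Dart.edge_mem]) (fun d => F d.edge)]
  rw [Finset.mul_sum]
  refine Finset.sum_congr rfl fun e he => ?_
  have h1 : ∀ d ∈ Finset.univ.filter (fun d : G.Dart => d.edge = e),
      F d.edge = F e := by
    intro d hd; rw [(Finset.mem_filter.mp hd).2]
  rw [Finset.sum_congr rfl h1, Finset.sum_const, nsmul_eq_mul]
  have hcard := G.dart_edge_fiber_card e (by rwa [← SimpleGraph.mem_edgeFinset])
  rw [show ({d : G.Dart | d.edge = e} : Finset _) = Finset.univ.filter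
      (fun d : G.Dart => d.edge = e) from rfl] at hcard
  rw [hcard]; norm_num

set_option maxHeartbeats 2000000 in
open Finset in
theorem sombor_total_graph_ppq (p q : ℕ) [Fact p.Prime] [Fact q.Prime]
    (hp : Odd p) (hq : Odd q) (hpq : p < q) :
    let A : ℝ := (p : ℝ) * ((q : ℝ) - 1) * ((p : ℝ) * ((q : ℝ) - 1) - 1) / 2 +
      (p : ℝ) * ((p : ℝ) - 1) * ((p : ℝ) * ((p : ℝ) - 1) - 1) / 2 +
      (p : ℝ) * ((p : ℝ) - 1) / 2 + (p : ℝ) ^ 2 * ((q : ℝ) - 1) + (p : ℝ) ^ 2 * ((p : ℝ) - 1)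
    let B : ℝ := 2 * (p : ℝ) ^ 2 * ((p : ℝ) - 1) * ((q : ℝ) - 1)
    let E : ℝ := ((totalGraph (ZMod (p ^ 2 * q))).edgeFinset.card : ℝ)
    E = (p : ℝ) * ((p : ℝ) + (q : ℝ) - 1) * ((p : ℝ) ^ 2 * (q : ℝ) - 1) / 2 ∧
    somborIndex (totalGraph (ZMod (p ^ 2 * q))) =
      Real.sqrt 2 * A * ((p : ℝ) ^ 2 * (q : ℝ) - (Nat.totient (p ^ 2 * q) : ℝ) - 1) +
        B * Real.sqrt (((p : ℝ) ^ 2 * (q : ℝ) - (Nat.totient (p ^ 2 * q) : ℝ) - 1) ^ 2 +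
          ((p : ℝ) ^ 2 * (q : ℝ) - (Nat.totient (p ^ 2 * q) : ℝ)) ^ 2) +
        Real.sqrt 2 * (E - A - B) *
          ((p : ℝ) ^ 2 * (q : ℝ) - (Nat.totient (p ^ 2 * q) : ℝ)) := by
  intro A B E
  have hA : A = (p : ℝ) * ((q : ℝ) - 1) * ((p : ℝ) * ((q : ℝ) - 1) - 1) / 2 +
      (p : ℝ) * ((p : ℝ) - 1) * ((p : ℝ) * ((p : ℝ) - 1) - 1) / 2 +
      (p : ℝ) * ((p : ℝ) - 1) / 2 + (p : ℝ) ^ 2 * ((q : ℝ) - 1) +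
      (p : ℝ) ^ 2 * ((p : ℝ) - 1) := rfl
  have hB : B = 2 * (p : ℝ) ^ 2 * ((p : ℝ) - 1) * ((q : ℝ) - 1) := rfl
  have hE : E = ((totalGraph (ZMod (p ^ 2 * q))).edgeFinset.card : ℝ) := rfl
  clear_value A B E
  have hp1 : p.Prime := Fact.out
  have hq1 : q.Prime := Fact.out
  have hp0 : 0 < p := hp1.pos
  have hq0 : 0 < q := hq1.pos
  have hpne : p ≠ q := hpq.ne
  set n := p ^ 2 * q with hn
  have hn0 : n ≠ 0 := by positivity
  haveI : NeZero n := ⟨hn0⟩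
  have hnodd : Odd n := (hp.pow).mul hq
  set G := totalGraph (ZMod n) with hG
  have hAdj : ∀ x y : ZMod n, G.Adj x y ↔ x ≠ y ∧ ¬IsUnit (x + y) := fun _ _ => Iff.rfl
  -- units of 2
  have h2unit : IsUnit (2 : ZMod n) := by
    have := (ZMod.isUnit_iff_coprime 2 n).mpr (Nat.coprime_two_left.mpr hnodd)
    simpa using this
  have hxx : ∀ x : ZMod n, IsUnit (x + x) ↔ IsUnit x := by
    intro x
    rw [← two_mul, IsUnit.mul_iff]
    simp [h2unit]
  -- counts of units / nonunits
  set N : Finset (ZMod n) := Finset.univ.filter (fun x => ¬ IsUnit x) with hNdef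
  have hsplitNU : (Finset.univ.filter (fun x : ZMod n => IsUnit x)).card + N.card
      = Fintype.card (ZMod n) := by
    rw [hNdef]
    rw [Finset.card_filter_add_card_filter_not]
    exact Finset.card_univ
  have hcardZ : Fintype.card (ZMod n) = n := ZMod.card n
  have hU : (Finset.univ.filter (fun x : ZMod n => IsUnit x)).card = n.totient := by
    rw [← ZMod.card_units_eq_totient n, ← Finset.card_univ]
    symm
    apply Finset.card_bij (fun (u : (ZMod n)ˣ) _ => (u : ZMod n))
    · intro u _; simp
    · intro u _ v _ h; exact Units.ext h
    · intro x hx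
      simp only [Finset.mem_filter] at hx
      exact ⟨hx.2.unit, Finset.mem_univ _, rfl⟩
  have hNcard : N.card = n - n.totient := by omega
  -- degree lemmas
  have hMcard : ∀ x : ZMod n,
      (Finset.univ.filter fun y => ¬IsUnit (x + y)).card = N.card := by
    intro x
    apply Finset.card_bij (fun y _ => x + y)
    · intro y hy
      simp only [hNdef, Finset.mem_filter, Finset.mem_univ, true_and] at hy ⊢
      exact hy
    · intro y _ y' _ h; exact add_left_cancel h
    · intro z hz
      simp only [hNdef, Finset.mem_filter, Finset.mem_univ, true_and] at hz
      refine ⟨z - x, ?_, by ring⟩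
      simp only [Finset.mem_filter, Finset.mem_univ, true_and]
      rwa [show x + (z - x) = z by ring]
  have hnb : ∀ x : ZMod n,
      G.neighborFinset x = ((Finset.univ.filter fun y => ¬IsUnit (x + y)).erase x) := by
    intro x
    ext y
    simp only [SimpleGraph.mem_neighborFinset, Finset.mem_erase, Finset.mem_filter,
      Finset.mem_univ, true_and]
    rw [hAdj x y]
    exact ⟨fun h => ⟨h.1.symm, h.2⟩, fun h => ⟨h.1.symm, h.2⟩⟩
  have hdegN : ∀ x : ZMod n, ¬IsUnit x → G.degree x + 1 = N.card := by
    intro x hx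
    have hmem : x ∈ (Finset.univ.filter fun y => ¬IsUnit (x + y)) := by
      simp only [Finset.mem_filter, Finset.mem_univ, true_and]
      exact fun h => hx ((hxx x).mp h)
    have h1 : 0 < (Finset.univ.filter fun y => ¬IsUnit (x + y)).card :=
      Finset.card_pos.mpr ⟨x, hmem⟩
    rw [show G.degree x = (G.neighborFinset x).card from rfl, hnb x,
      Finset.card_erase_of_mem hmem]
    rw [hMcard x] at h1 ⊢
    omega
  have hdegU : ∀ x : ZMod n, IsUnit x → G.degree x = N.card := by
    intro x hx
    have hmem : x ∉ (Finset.univ.filter fun y => ¬IsUnit (x + y)) := by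
      simp only [Finset.mem_filter, Finset.mem_univ, true_and, not_not]
      exact (hxx x).mpr hx
    rw [show G.degree x = (G.neighborFinset x).card from rfl, hnb x,
      Finset.erase_eq_of_notMem hmem, hMcard x]
  -- divisibility classes
  set Dp : ZMod n → Prop := fun x => p ∣ x.val with hDpdef
  set Dq : ZMod n → Prop := fun x => q ∣ x.val with hDqdef
  have hpdvd : p ∣ n := ⟨p * q, by rw [hn]; ring⟩
  have hqdvd : q ∣ n := ⟨p ^ 2, by rw [hn]; ring⟩
  have hpqdvd : p * q ∣ n := ⟨p, by rw [hn]; ring⟩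
  have hunit : ∀ x : ZMod n, IsUnit x ↔ (¬ Dp x ∧ ¬ Dq x) := by
    intro x
    rw [zmod_isUnit_iff']
    have h1 : x.val.Coprime n ↔ x.val.Coprime (p ^ 2 * q) := Iff.rfl
    rw [h1, Nat.coprime_mul_iff_right, Nat.coprime_pow_right_iff (by norm_num : 0 < 2)]
    constructor
    · rintro ⟨h2, h3⟩
      exact ⟨fun hd => (Nat.Prime.coprime_iff_not_dvd hp1).mp h2.symm hd,
        fun hd => (Nat.Prime.coprime_iff_not_dvd hq1).mp h3.symm hd⟩
    · rintro ⟨h2, h3⟩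
      exact ⟨((Nat.Prime.coprime_iff_not_dvd hp1).mpr h2).symm,
        ((Nat.Prime.coprime_iff_not_dvd hq1).mpr h3).symm⟩
  have haddP : ∀ x y : ZMod n, Dp (x + y) ↔ p ∣ (x.val + y.val) := fun x y =>
    dvd_val_add_iff' hpdvd x y
  have haddQ : ∀ x y : ZMod n, Dq (x + y) ↔ q ∣ (x.val + y.val) := fun x y =>
    dvd_val_add_iff' hqdvd x y
  -- class finsets
  set SA : Finset (ZMod n) := Finset.univ.filter (fun x => Dp x ∧ ¬ Dq x) with hSAdef
  set SB : Finset (ZMod n) := Finset.univ.filter (fun x => Dq x ∧ ¬ Dp x) with hSBdef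
  have hcDp : (Finset.univ.filter (fun x : ZMod n => Dp x)).card = p * q := by
    have h1 := card_val_dvd' (n := n) hpdvd
    have h2 : n / p = p * q := Nat.div_eq_of_eq_mul_left hp0 (by rw [hn]; try ring)
    rw [h2] at h1
    exact h1
  have hcDq : (Finset.univ.filter (fun x : ZMod n => Dq x)).card = p ^ 2 := by
    have h1 := card_val_dvd' (n := n) hqdvd
    have h2 : n / q = p ^ 2 := Nat.div_eq_of_eq_mul_left hq0 (by rw [hn]; try ring)
    rw [h2] at h1
    exact h1
  have hcDpq : (Finset.univ.filter (fun x : ZMod n => Dp x ∧ Dq x)).card = p := by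
    have hiff : ∀ x : ZMod n, (Dp x ∧ Dq x) ↔ (p * q) ∣ x.val := by
      intro x
      constructor
      · rintro ⟨h1, h2⟩
        exact (Nat.Coprime.mul_dvd_of_dvd_of_dvd
          ((Nat.coprime_primes hp1 hq1).mpr hpne) h1 h2)
      · rintro h
        exact ⟨(dvd_mul_right p q).trans h, (dvd_mul_left q p).trans h⟩
    have h1 := card_val_dvd' (n := n) hpqdvd
    have h2 : n / (p * q) = p := Nat.div_eq_of_eq_mul_left (Nat.mul_pos hp0 hq0)
      (by rw [hn]; try ring)
    rw [h2] at h1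
    have e1 : Finset.univ.filter (fun x : ZMod n => Dp x ∧ Dq x)
        = Finset.univ.filter (fun x : ZMod n => (p * q) ∣ x.val) := by
      ext x
      simp only [Finset.mem_filter, Finset.mem_univ, true_and]
      exact hiff x
    rw [e1]
    exact h1
  have hSA : SA.card + p = p * q := by
    have key := Finset.card_filter_add_card_filter_not
      (s := Finset.univ.filter (fun x : ZMod n => Dp x)) (p := fun x => Dq x)
    rw [hcDp] at key
    have e1 : (Finset.univ.filter (fun x : ZMod n => Dp x)).filter (fun x => Dq x)
        = Finset.univ.filter (fun x : ZMod n => Dp x ∧ Dq x) := by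
      ext x
      simp only [Finset.mem_filter, Finset.mem_univ, true_and]
      try tauto
    have e2 : (Finset.univ.filter (fun x : ZMod n => Dp x)).filter (fun x => ¬ Dq x)
        = SA := by
      rw [hSAdef]
      ext x
      simp only [Finset.mem_filter, Finset.mem_univ, true_and]
      try tauto
    rw [e1, e2, hcDpq] at key
    omega
  have hSB : SB.card + p = p ^ 2 := by
    have key := Finset.card_filter_add_card_filter_not
      (s := Finset.univ.filter (fun x : ZMod n => Dq x)) (p := fun x => Dp x)
    rw [hcDq] at key
    have e1 : (Finset.univ.filter (fun x : ZMod n => Dq x)).filter (fun x => Dp x)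
        = Finset.univ.filter (fun x : ZMod n => Dp x ∧ Dq x) := by
      ext x
      simp only [Finset.mem_filter, Finset.mem_univ, true_and]
      try tauto
    have e2 : (Finset.univ.filter (fun x : ZMod n => Dq x)).filter (fun x => ¬ Dp x)
        = SB := by
      rw [hSBdef]
      ext x
      simp only [Finset.mem_filter, Finset.mem_univ, true_and]
      try tauto
    rw [e1, e2, hcDpq] at key
    omega
  -- real constants
  set tR : ℝ := ((Nat.totient n : ℕ) : ℝ) with htRdef
  set zr : ℝ := (p : ℝ) ^ 2 * (q : ℝ) - tR with hzrdef
  have htot_le : Nat.totient n ≤ n := Nat.totient_le n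
  have hzrN : ((N.card : ℕ) : ℝ) = zr := by
    rw [hNcard, Nat.cast_sub htot_le, hzrdef, htRdef]
    rw [show ((n : ℕ) : ℝ) = ((p ^ 2 * q : ℕ) : ℝ) by rw [hn]]
    push_cast
    ring
  have htR : tR = (p : ℝ) * ((p : ℝ) - 1) * ((q : ℝ) - 1) := by
    have hnat : Nat.totient n = p ^ 1 * (p - 1) * (q - 1) := by
      rw [show Nat.totient n = Nat.totient (p ^ 2 * q) by rw [hn]]
      rw [Nat.totient_mul (((Nat.coprime_primes hp1 hq1).mpr hpne).pow_left 2),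
        Nat.totient_prime_pow hp1 (by norm_num : 0 < 2), Nat.totient_prime hq1]
    rw [htRdef, hnat]
    push_cast [Nat.cast_sub hp1.one_lt.le, Nat.cast_sub hq1.one_lt.le]
    ring
  have hdegNR : ∀ x : ZMod n, ¬IsUnit x → ((G.degree x : ℕ) : ℝ) = zr - 1 := by
    intro x hx
    have h := hdegN x hx
    have h2 : ((G.degree x : ℕ) : ℝ) + 1 = ((N.card : ℕ) : ℝ) := by
      exact_mod_cast congrArg (Nat.cast : ℕ → ℝ) h
    rw [hzrN] at h2
    linarith
  have hdegUR : ∀ x : ZMod n, IsUnit x → ((G.degree x : ℕ) : ℝ) = zr := by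
    intro x hx
    rw [hdegU x hx, hzrN]
  have hzr1 : (1 : ℝ) ≤ zr := by
    rw [← hzrN]
    have h0 : (0 : ZMod n) ∈ N := by
      rw [hNdef]
      simp only [Finset.mem_filter, Finset.mem_univ, true_and]
      rw [hunit]
      intro hcon
      exact hcon.1 (by rw [hDpdef]; simp)
    have := Finset.card_pos.mpr ⟨(0 : ZMod n), h0⟩
    exact_mod_cast this
  -- key iff
  have hkey : ∀ x y : ZMod n, ((¬IsUnit x ∧ ¬IsUnit y) ∧ IsUnit (x + y)) ↔
      ((Dp x ∧ ¬ Dq x) ∧ (Dq y ∧ ¬ Dp y)) ∨ ((Dq x ∧ ¬ Dp x) ∧ (Dp y ∧ ¬ Dq y)) := by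
    intro x y
    constructor
    · rintro ⟨⟨hx, hy⟩, hxy⟩
      rw [hunit] at hxy
      obtain ⟨hps, hqs⟩ := hxy
      have h1 : ¬(Dp x ∧ Dp y) := by
        rintro ⟨h1, h2⟩; exact hps ((haddP x y).mpr (dvd_add h1 h2))
      have h2 : ¬(Dq x ∧ Dq y) := by
        rintro ⟨h1, h2⟩; exact hqs ((haddQ x y).mpr (dvd_add h1 h2))
      rw [hunit] at hx hy
      tauto
    · rintro (⟨⟨hpx, hqx⟩, hqy, hpy⟩ | ⟨⟨hqx, hpx⟩, hpy, hqy⟩)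
      · refine ⟨⟨?_, ?_⟩, ?_⟩
        · rw [hunit]; tauto
        · rw [hunit]; tauto
        · rw [hunit]
          refine ⟨fun hd => hpy ((Nat.dvd_add_right hpx).mp ((haddP x y).mp hd)),
            fun hd => hqx ?_⟩
          have h3 : q ∣ (x.val + y.val) := (haddQ x y).mp hd
          rw [Nat.add_comm] at h3
          exact (Nat.dvd_add_right hqy).mp h3
      · refine ⟨⟨?_, ?_⟩, ?_⟩
        · rw [hunit]; tauto
        · rw [hunit]; tauto
        · rw [hunit]
          refine ⟨fun hd => hpx ?_, fun hd => hqy ((Nat.dvd_add_right hqx).mp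
            ((haddQ x y).mp hd))⟩
          have h3 : p ∣ (x.val + y.val) := (haddP x y).mp hd
          rw [Nat.add_comm] at h3
          exact (Nat.dvd_add_right hpy).mp h3
  -- pair sets
  set S0 : Finset (ZMod n × ZMod n) :=
    Finset.univ.filter (fun z => ¬IsUnit z.1 ∧ ¬IsUnit z.2) with hS0def
  set S1 : Finset (ZMod n × ZMod n) := S0.filter (fun z => IsUnit (z.1 + z.2)) with hS1def
  set S2 : Finset (ZMod n × ZMod n) := S0.filter (fun z => ¬IsUnit (z.1 + z.2)) with hS2def
  set S2d : Finset (ZMod n × ZMod n) := S2.filter (fun z => z.1 = z.2) with hS2ddef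
  set S2o : Finset (ZMod n × ZMod n) := S2.filter (fun z => ¬ z.1 = z.2) with hS2odef
  have hS0card : S0.card = N.card * N.card := by
    have e : S0 = N ×ˢ N := by
      rw [hS0def, hNdef]
      ext z
      simp only [Finset.mem_filter, Finset.mem_univ, true_and, Finset.mem_product]
    rw [e, Finset.card_product]
  have hS12 : S1.card + S2.card = S0.card := by
    have key := Finset.card_filter_add_card_filter_not
      (s := S0) (p := fun z : ZMod n × ZMod n => IsUnit (z.1 + z.2))
    rw [← hS1def, ← hS2def] at key
    exact key
  have hS2split : S2d.card + S2o.card = S2.card := by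
    have key := Finset.card_filter_add_card_filter_not
      (s := S2) (p := fun z : ZMod n × ZMod n => z.1 = z.2)
    rw [← hS2ddef, ← hS2odef] at key
    exact key
  have hS1card : S1.card = 2 * (SA.card * SB.card) := by
    have e : S1 = (SA ×ˢ SB) ∪ (SB ×ˢ SA) := by
      rw [hS1def, hS0def, hSAdef, hSBdef]
      ext z
      simp only [Finset.mem_filter, Finset.mem_univ, true_and, Finset.mem_union,
        Finset.mem_product]
      constructor
      · rintro ⟨⟨h1, h2⟩, h3⟩
        exact (hkey z.1 z.2).mp ⟨⟨h1, h2⟩, h3⟩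
      · intro h
        have h2 := (hkey z.1 z.2).mpr h
        exact ⟨h2.1, h2.2⟩
    have hdisj : Disjoint (SA ×ˢ SB) (SB ×ˢ SA) := by
      rw [Finset.disjoint_left]
      rintro z hz hz'
      rw [Finset.mem_product] at hz hz'
      have h1 := hz.1
      have h2 := hz'.1
      rw [hSAdef] at h1
      rw [hSBdef] at h2
      simp only [Finset.mem_filter, Finset.mem_univ, true_and] at h1 h2
      exact h2.2 h1.1
    rw [e, Finset.card_union_of_disjoint hdisj, Finset.card_product, Finset.card_product]
    ring
  have hS2dcard : S2d.card = N.card := by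
    apply Finset.card_bij (fun z _ => z.1)
    · intro z hz
      rw [hS2ddef, hS2def, hS0def] at hz
      simp only [Finset.mem_filter, Finset.mem_univ, true_and] at hz
      rw [hNdef]
      simp only [Finset.mem_filter, Finset.mem_univ, true_and]
      exact hz.1.1.1
    · intro z hz w hw hzw
      rw [hS2ddef] at hz hw
      simp only [Finset.mem_filter] at hz hw
      have h2 : z.2 = w.2 := by rw [← hz.2, ← hw.2]; exact hzw
      exact Prod.ext hzw h2
    · intro x hx
      rw [hNdef] at hx
      simp only [Finset.mem_filter, Finset.mem_univ, true_and] at hx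
      refine ⟨(x, x), ?_, rfl⟩
      rw [hS2ddef, hS2def, hS0def]
      simp only [Finset.mem_filter, Finset.mem_univ, true_and]
      exact ⟨⟨⟨hx, hx⟩, fun h => hx ((hxx x).mp h)⟩, trivial⟩
  -- fiberwise counting of adjacency pairs with constrained first coordinate
  set bigN : Finset (ZMod n × ZMod n) :=
    Finset.univ.filter (fun z => ¬IsUnit z.1 ∧ G.Adj z.1 z.2) with hbigNdef
  set bigU : Finset (ZMod n × ZMod n) :=
    Finset.univ.filter (fun z => IsUnit z.1 ∧ G.Adj z.1 z.2) with hbigUdef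
  have hfib : ∀ (P : ZMod n → Prop) (S : Finset (ZMod n × ZMod n)) (T : Finset (ZMod n)),
      (∀ z : ZMod n × ZMod n, z ∈ S ↔ (P z.1 ∧ G.Adj z.1 z.2)) →
      (∀ x : ZMod n, x ∈ T ↔ P x) →
      S.card = ∑ x ∈ T, G.degree x := by
    intro P S T hmem hmemT
    have H : ∀ z ∈ S, Prod.fst z ∈ T := by
      intro z hz
      rw [hmem] at hz
      rw [hmemT]
      exact hz.1
    rw [Finset.card_eq_sum_card_fiberwise H]
    refine Finset.sum_congr rfl fun x hx => ?_
    have hPx : P x := (hmemT x).mp hx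
    rw [show G.degree x = (G.neighborFinset x).card from rfl]
    apply Finset.card_bij (fun z _ => z.2)
    · intro z hz
      simp only [Finset.mem_filter] at hz
      obtain ⟨hz1, hz2⟩ := hz
      rw [hmem] at hz1
      rw [SimpleGraph.mem_neighborFinset, ← hz2]
      exact hz1.2
    · intro z hz w hw hzw
      simp only [Finset.mem_filter] at hz hw
      exact Prod.ext (hz.2.trans hw.2.symm) hzw
    · intro y hy
      rw [SimpleGraph.mem_neighborFinset] at hy
      refine ⟨(x, y), ?_, rfl⟩
      simp only [Finset.mem_filter]
      exact ⟨(hmem (x, y)).mpr ⟨hPx, hy⟩, trivial⟩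
  have hbigNcard : bigN.card = ∑ x ∈ N, G.degree x := by
    refine hfib (fun x => ¬IsUnit x) bigN N ?_ ?_
    · intro z
      rw [hbigNdef]
      simp only [Finset.mem_filter, Finset.mem_univ, true_and]
    · intro x
      rw [hNdef]
      simp only [Finset.mem_filter, Finset.mem_univ, true_and]
  have hbigUcard : bigU.card
      = ∑ x ∈ Finset.univ.filter (fun x : ZMod n => IsUnit x), G.degree x := by
    refine hfib (fun x => IsUnit x) bigU _ ?_ ?_
    · intro z
      rw [hbigUdef]
      simp only [Finset.mem_filter, Finset.mem_univ, true_and]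
    · intro x
      simp only [Finset.mem_filter, Finset.mem_univ, true_and]
  have hsumNval : (∑ x ∈ N, G.degree x) + N.card = N.card * N.card := by
    have h1 : ∑ x ∈ N, (G.degree x + 1) = ∑ _x ∈ N, N.card := by
      refine Finset.sum_congr rfl fun x hx => ?_
      refine hdegN x ?_
      rw [hNdef] at hx
      simpa using hx
    rw [Finset.sum_add_distrib, Finset.sum_const, Finset.sum_const, smul_eq_mul,
      smul_eq_mul, mul_one] at h1
    exact h1
  have hsumUval : (∑ x ∈ Finset.univ.filter (fun x : ZMod n => IsUnit x), G.degree x)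
      = Nat.totient n * N.card := by
    have h1 : ∑ x ∈ Finset.univ.filter (fun x : ZMod n => IsUnit x), G.degree x
        = ∑ _x ∈ Finset.univ.filter (fun x : ZMod n => IsUnit x), N.card := by
      refine Finset.sum_congr rfl fun x hx => ?_
      exact hdegU x (by simpa using hx)
    rw [h1, Finset.sum_const, smul_eq_mul, hU]
  -- splits of bigN / bigU by unit-ness of the second coordinate
  set cNU : Finset (ZMod n × ZMod n) := bigN.filter (fun z => IsUnit z.2) with hcNUdef
  set cNN : Finset (ZMod n × ZMod n) := bigN.filter (fun z => ¬IsUnit z.2) with hcNNdef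
  set cUU : Finset (ZMod n × ZMod n) := bigU.filter (fun z => IsUnit z.2) with hcUUdef
  set cUN : Finset (ZMod n × ZMod n) := bigU.filter (fun z => ¬IsUnit z.2) with hcUNdef
  have hNsplit : cNU.card + cNN.card = bigN.card := by
    have key := Finset.card_filter_add_card_filter_not
      (s := bigN) (p := fun z : ZMod n × ZMod n => IsUnit z.2)
    rw [← hcNUdef, ← hcNNdef] at key
    exact key
  have hUsplit : cUU.card + cUN.card = bigU.card := by
    have key := Finset.card_filter_add_card_filter_not
      (s := bigU) (p := fun z : ZMod n × ZMod n => IsUnit z.2)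
    rw [← hcUUdef, ← hcUNdef] at key
    exact key
  have hcNNeq : cNN = S2o := by
    rw [hcNNdef, hbigNdef, hS2odef, hS2def, hS0def]
    ext z
    simp only [Finset.mem_filter, Finset.mem_univ, true_and]
    rw [hAdj]
    constructor
    · rintro ⟨⟨h1, h2, h3⟩, h4⟩
      exact ⟨⟨⟨h1, h4⟩, h3⟩, h2⟩
    · rintro ⟨⟨⟨h1, h4⟩, h3⟩, h2⟩
      exact ⟨⟨h1, h2, h3⟩, h4⟩
  have hswap : cUN.card = cNU.card := by
    apply Finset.card_bij (fun z _ => (z.2, z.1))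
    · intro z hz
      rw [hcUNdef, hbigUdef] at hz
      rw [hcNUdef, hbigNdef]
      simp only [Finset.mem_filter, Finset.mem_univ, true_and] at hz ⊢
      exact ⟨⟨hz.2, (hz.1.2).symm⟩, hz.1.1⟩
    · intro z hz w hw hzw
      exact Prod.ext (congrArg Prod.snd hzw) (congrArg Prod.fst hzw)
    · intro z hz
      rw [hcNUdef, hbigNdef] at hz
      simp only [Finset.mem_filter, Finset.mem_univ, true_and] at hz
      refine ⟨(z.2, z.1), ?_, rfl⟩
      rw [hcUNdef, hbigUdef]
      simp only [Finset.mem_filter, Finset.mem_univ, true_and]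
      exact ⟨⟨hz.2, (hz.1.2).symm⟩, hz.1.1⟩
  -- all adjacent ordered pairs
  set allAdj : Finset (ZMod n × ZMod n) :=
    Finset.univ.filter (fun z => G.Adj z.1 z.2) with halldef
  have heqU : allAdj.filter (fun z => IsUnit z.1) = bigU := by
    rw [halldef, hbigUdef]
    ext z
    simp only [Finset.mem_filter, Finset.mem_univ, true_and]
    tauto
  have heqN : allAdj.filter (fun z => ¬IsUnit z.1) = bigN := by
    rw [halldef, hbigNdef]
    ext z
    simp only [Finset.mem_filter, Finset.mem_univ, true_and]
    tauto
  have hallsplit : bigU.card + bigN.card = allAdj.card := by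
    have key := Finset.card_filter_add_card_filter_not
      (s := allAdj) (p := fun z : ZMod n × ZMod n => IsUnit z.1)
    rw [heqU, heqN] at key
    exact key
  have hedge : 2 * G.edgeFinset.card = allAdj.card := by
    rw [SimpleGraph.two_mul_card_edgeFinset, halldef]
  -- Sombor sum over ordered pairs
  have h2SO := two_mul_sum_edgeFinset G
    (fun u v => Real.sqrt ((G.degree u : ℝ) ^ 2 + (G.degree v : ℝ) ^ 2))
    (fun u v => by rw [add_comm])
  have hSO : somborIndex G = ∑ e ∈ G.edgeFinset,
      Sym2.lift ⟨fun u v => Real.sqrt ((G.degree u : ℝ) ^ 2 + (G.degree v : ℝ) ^ 2),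
        fun u v => by dsimp only; rw [add_comm]⟩ e := rfl
  set Fx : ZMod n × ZMod n → ℝ :=
    fun z => Real.sqrt ((G.degree z.1 : ℝ) ^ 2 + (G.degree z.2 : ℝ) ^ 2) with hFxdef
  have h2SO' : 2 * somborIndex G = ∑ z ∈ allAdj, Fx z := by
    rw [hSO, halldef, hFxdef]
    exact h2SO
  have esum1 := Finset.sum_filter_add_sum_filter_not allAdj
    (fun z : ZMod n × ZMod n => IsUnit z.1) Fx
  rw [heqU, heqN] at esum1
  have esum2 := Finset.sum_filter_add_sum_filter_not bigN
    (fun z : ZMod n × ZMod n => IsUnit z.2) Fx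
  rw [← hcNUdef, ← hcNNdef, hcNNeq] at esum2
  have esum3 := Finset.sum_filter_add_sum_filter_not bigU
    (fun z : ZMod n × ZMod n => IsUnit z.2) Fx
  rw [← hcUUdef, ← hcUNdef] at esum3
  -- constant values on each block
  have hsqrt2c : ∀ c : ℝ, 0 ≤ c → Real.sqrt (c ^ 2 + c ^ 2) = Real.sqrt 2 * c := by
    intro c hc
    rw [show c ^ 2 + c ^ 2 = 2 * c ^ 2 by ring, Real.sqrt_mul (by norm_num), Real.sqrt_sq hc]
  have hval1 : ∑ z ∈ S2o, Fx z = S2o.card * (Real.sqrt 2 * (zr - 1)) := by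
    have h1 : ∀ z ∈ S2o, Fx z = Real.sqrt 2 * (zr - 1) := by
      intro z hz
      rw [← hcNNeq, hcNNdef, hbigNdef] at hz
      simp only [Finset.mem_filter, Finset.mem_univ, true_and] at hz
      rw [hFxdef]
      dsimp only
      rw [hdegNR z.1 hz.1.1, hdegNR z.2 hz.2]
      exact hsqrt2c _ (by linarith)
    rw [Finset.sum_congr rfl h1, Finset.sum_const, nsmul_eq_mul]
  have hval2 : ∑ z ∈ cNU, Fx z = cNU.card * Real.sqrt ((zr - 1) ^ 2 + zr ^ 2) := by
    have h1 : ∀ z ∈ cNU, Fx z = Real.sqrt ((zr - 1) ^ 2 + zr ^ 2) := by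
      intro z hz
      rw [hcNUdef, hbigNdef] at hz
      simp only [Finset.mem_filter, Finset.mem_univ, true_and] at hz
      rw [hFxdef]
      dsimp only
      rw [hdegNR z.1 hz.1.1, hdegUR z.2 hz.2]
    rw [Finset.sum_congr rfl h1, Finset.sum_const, nsmul_eq_mul]
  have hval3 : ∑ z ∈ cUN, Fx z = cUN.card * Real.sqrt ((zr - 1) ^ 2 + zr ^ 2) := by
    have h1 : ∀ z ∈ cUN, Fx z = Real.sqrt ((zr - 1) ^ 2 + zr ^ 2) := by
      intro z hz
      rw [hcUNdef, hbigUdef] at hz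
      simp only [Finset.mem_filter, Finset.mem_univ, true_and] at hz
      rw [hFxdef]
      dsimp only
      rw [hdegUR z.1 hz.1.1, hdegNR z.2 hz.2, add_comm]
    rw [Finset.sum_congr rfl h1, Finset.sum_const, nsmul_eq_mul]
  have hval4 : ∑ z ∈ cUU, Fx z = cUU.card * (Real.sqrt 2 * zr) := by
    have h1 : ∀ z ∈ cUU, Fx z = Real.sqrt 2 * zr := by
      intro z hz
      rw [hcUUdef, hbigUdef] at hz
      simp only [Finset.mem_filter, Finset.mem_univ, true_and] at hz
      rw [hFxdef]
      dsimp only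
      rw [hdegUR z.1 hz.1.1, hdegUR z.2 hz.2]
      exact hsqrt2c _ (by linarith)
    rw [Finset.sum_congr rfl h1, Finset.sum_const, nsmul_eq_mul]
  -- cast the counting identities to ℝ
  have haR : ((SA.card : ℕ) : ℝ) = (p : ℝ) * q - p := by
    have h := congrArg (Nat.cast : ℕ → ℝ) hSA
    push_cast at h
    linarith
  have hbR : ((SB.card : ℕ) : ℝ) = (p : ℝ) ^ 2 - p := by
    have h := congrArg (Nat.cast : ℕ → ℝ) hSB
    push_cast at h
    linarith
  have c1 : ((S1.card : ℕ) : ℝ) + ((S2.card : ℕ) : ℝ) = ((S0.card : ℕ) : ℝ) := by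
    exact_mod_cast congrArg (Nat.cast : ℕ → ℝ) hS12
  have c2 : ((S2d.card : ℕ) : ℝ) + ((S2o.card : ℕ) : ℝ) = ((S2.card : ℕ) : ℝ) := by
    exact_mod_cast congrArg (Nat.cast : ℕ → ℝ) hS2split
  have c3 : ((S0.card : ℕ) : ℝ) = zr * zr := by
    have h := congrArg (Nat.cast : ℕ → ℝ) hS0card
    push_cast at h
    rw [hzrN] at h
    exact h
  have c4 : ((S1.card : ℕ) : ℝ) = 2 * (((p : ℝ) * q - p) * ((p : ℝ) ^ 2 - p)) := by
    have h := congrArg (Nat.cast : ℕ → ℝ) hS1card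
    push_cast at h
    rw [haR, hbR] at h
    exact h
  have c5 : ((S2d.card : ℕ) : ℝ) = zr := by
    have h := congrArg (Nat.cast : ℕ → ℝ) hS2dcard
    rw [hzrN] at h
    exact h
  have c6 : ((bigN.card : ℕ) : ℝ) = zr * zr - zr := by
    have h1 := congrArg (Nat.cast : ℕ → ℝ) hbigNcard
    have h2 := congrArg (Nat.cast : ℕ → ℝ) hsumNval
    push_cast at h2
    rw [hzrN] at h2
    rw [h1]
    push_cast
    linarith
  have c7 : ((bigU.card : ℕ) : ℝ) = tR * zr := by
    have h1 := congrArg (Nat.cast : ℕ → ℝ) hbigUcard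
    have h2 := congrArg (Nat.cast : ℕ → ℝ) hsumUval
    push_cast at h1 h2
    rw [hzrN] at h2
    rw [h1, h2, htRdef]
  have QA : ((S2o.card : ℕ) : ℝ) = 2 * A := by
    have e : ((S2o.card : ℕ) : ℝ)
        = zr * zr - 2 * (((p : ℝ) * q - p) * ((p : ℝ) ^ 2 - p)) - zr := by
      linarith [c1, c2, c3, c4, c5]
    rw [e, hA, hzrdef, htR]
    ring
  rw [hcNNeq] at hNsplit
  have c8 : ((cNU.card : ℕ) : ℝ) + ((S2o.card : ℕ) : ℝ) = ((bigN.card : ℕ) : ℝ) := by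
    exact_mod_cast congrArg (Nat.cast : ℕ → ℝ) hNsplit
  have eNU : ((cNU.card : ℕ) : ℝ) = zr * zr - zr - 2 * A := by
    linarith [c6, QA, c8]
  have QNU : ((cNU.card : ℕ) : ℝ) = B := by
    rw [eNU, hA, hB, hzrdef, htR]
    ring
  have QUN : ((cUN.card : ℕ) : ℝ) = B := by
    rw [show ((cUN.card : ℕ) : ℝ) = ((cNU.card : ℕ) : ℝ) from congrArg _ hswap]
    exact QNU
  have c9 : ((cUU.card : ℕ) : ℝ) + ((cUN.card : ℕ) : ℝ) = ((bigU.card : ℕ) : ℝ) := by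
    exact_mod_cast congrArg (Nat.cast : ℕ → ℝ) hUsplit
  have c10 : 2 * E = ((bigU.card : ℕ) : ℝ) + ((bigN.card : ℕ) : ℝ) := by
    have h1 := congrArg (Nat.cast : ℕ → ℝ) hedge
    have h2 := congrArg (Nat.cast : ℕ → ℝ) hallsplit
    push_cast at h1 h2
    rw [hE]
    linarith
  have h2E : 2 * E = tR * zr + (zr * zr - zr) := by
    rw [c10, c6, c7]
  constructor
  · -- the edge count
    rw [hzrdef, htR] at h2E
    linear_combination h2E / 2
  · -- the Sombor index
    have QUU : ((cUU.card : ℕ) : ℝ) = 2 * E - 2 * A - 2 * B := by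
      linarith [c9, c7, QUN, h2E, eNU, QNU]
    have hfinal2 : 2 * somborIndex G
        = ((cUU.card : ℕ) : ℝ) * (Real.sqrt 2 * zr)
          + ((cUN.card : ℕ) : ℝ) * Real.sqrt ((zr - 1) ^ 2 + zr ^ 2)
          + ((cNU.card : ℕ) : ℝ) * Real.sqrt ((zr - 1) ^ 2 + zr ^ 2)
          + ((S2o.card : ℕ) : ℝ) * (Real.sqrt 2 * (zr - 1)) := by
      rw [h2SO', ← esum1, ← esum3, ← esum2, hval1, hval2, hval3, hval4]
      ring
    rw [QUU, QUN, QNU, QA] at hfinal2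
    linear_combination hfinal2 / 2
end

section
/- Let n be a positive even integer. Then the Sombor index of the unit graph of ℤ_n satisfies SO(G(ℤ_n)) = n·φ(n)²/√2, where φ is Euler's totient function. -/
open scoped Classical

lemma not_isUnit_double (n : ℕ) [NeZero n] (hn : Even n) (x : ZMod n) :
    ¬ IsUnit (x + x) := by
  intro h
  have h2 : (2 : ℕ) ∣ n := hn.two_dvd
  have hm := h.map (ZMod.castHom h2 (ZMod 2))
  rw [map_add] at hm
  have hz : (ZMod.castHom h2 (ZMod 2)) x + (ZMod.castHom h2 (ZMod 2)) x = 0 := by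
    have h0 : ∀ a : ZMod 2, a + a = 0 := by decide
    exact h0 _
  rw [hz] at hm
  exact hm.ne_zero rfl

open Finset in
lemma degree_unitGraph (n : ℕ) [NeZero n] (hn : Even n) (x : ZMod n) :
    (unitGraph (ZMod n)).degree x = n.totient := by
  classical
  rw [← ZMod.card_units_eq_totient n, SimpleGraph.degree,
    SimpleGraph.neighborFinset_eq_filter]
  have hfilter : (univ.filter ((unitGraph (ZMod n)).Adj x)) =
      univ.filter (fun y => IsUnit (x + y)) := by
    ext y
    simp only [mem_filter, mem_univ, true_and]
    constructor
    · exact fun h => h.2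
    · intro h
      refine ⟨fun hxy => ?_, h⟩
      exact not_isUnit_double n hn x (by rwa [← hxy] at h)
  rw [hfilter]
  have hcard : (univ.filter (fun y : ZMod n => IsUnit (x + y))).card =
      (univ.filter (fun a : ZMod n => IsUnit a)).card := by
    apply Finset.card_nbij' (fun y => x + y) (fun a => a - x)
    · intro y hy
      simp only [coe_filter, mem_filter, mem_univ, true_and, Set.mem_setOf_eq] at hy ⊢
      exact hy
    · intro a ha
      simp only [coe_filter, mem_filter, mem_univ, true_and, Set.mem_setOf_eq] at ha ⊢
      simpa using ha
    · intro y _; ring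
    · intro a _; ring
  rw [hcard]
  rw [← Fintype.card_subtype]
  exact (Fintype.card_congr ⟨fun u => ⟨u.1, u.isUnit⟩, fun a => a.2.unit,
    fun u => Units.ext rfl, fun a => Subtype.ext a.2.unit_spec⟩).symm

theorem sombor_unit_graph_even (n : ℕ) [NeZero n] (hn : Even n) :
    somborIndex (unitGraph (ZMod n)) =
      (n : ℝ) * (Nat.totient n : ℝ) ^ 2 / Real.sqrt 2 := by
  classical
  set k : ℕ := n.totient with hk
  have hdeg := degree_unitGraph n hn
  have hterm : ∀ e ∈ (unitGraph (ZMod n)).edgeFinset,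
      Sym2.lift ⟨fun u v => Real.sqrt (((unitGraph (ZMod n)).degree u : ℝ) ^ 2 +
        ((unitGraph (ZMod n)).degree v : ℝ) ^ 2),
        fun u v => by dsimp only; rw [add_comm]⟩ e = Real.sqrt 2 * k := by
    intro e _
    induction e using Sym2.ind with
    | _ u v =>
      rw [Sym2.lift_mk]
      dsimp only
      rw [hdeg u, hdeg v, ← two_mul, Real.sqrt_mul (by norm_num),
        Real.sqrt_sq (by positivity)]
  rw [somborIndex, Finset.sum_congr rfl hterm, Finset.sum_const, nsmul_eq_mul]
  have hedges : 2 * (unitGraph (ZMod n)).edgeFinset.card = n * k := by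
    rw [← (unitGraph (ZMod n)).sum_degrees_eq_twice_card_edges]
    simp [hdeg, ZMod.card, hk]
  have hedgesR : ((unitGraph (ZMod n)).edgeFinset.card : ℝ) = n * k / 2 := by
    have := congrArg (fun m : ℕ => (m : ℝ)) hedges
    push_cast at this
    linarith
  rw [hedgesR]
  have h2 : Real.sqrt 2 * Real.sqrt 2 = 2 := Real.mul_self_sqrt (by norm_num)
  have hs : Real.sqrt 2 ≠ 0 := by positivity
  have h2' : Real.sqrt 2 ^ 2 = 2 := Real.sq_sqrt (by norm_num)
  rw [eq_div_iff hs]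
  linear_combination ((n : ℝ) * (k : ℝ) ^ 2) / 2 * h2'
end

section
/- Let p be an odd prime, α ≥ 1 a natural number, and n = p^α. Then the Sombor index of the unit graph of ℤ_n satisfies SO(G(ℤ_n)) = φ(n)(n − φ(n))·√(φ(n)² + (φ(n) − 1)²) + φ(n)·(φ(n) − 1 − (n − φ(n)))·(φ(n) − 1)/√2, where φ is Euler's totient function. -/
open scoped Classical

open Finset SimpleGraph

section Aux

lemma aux_sum_edgeFinset_two_mul {V : Type*} [Fintype V] (G : SimpleGraph V)
    [DecidableRel G.Adj] (g : Sym2 V → ℝ) :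
    2 * ∑ e ∈ G.edgeFinset, g e = ∑ v, ∑ w ∈ G.neighborFinset v, g s(v, w) := by
  classical
  have h1 : ∑ d : G.Dart, g d.edge = 2 * ∑ e ∈ G.edgeFinset, g e := by
    rw [← Finset.sum_fiberwise_of_maps_to (g := SimpleGraph.Dart.edge) (t := G.edgeFinset)
      (fun d _ => by rw [mem_edgeFinset]; exact d.edge_mem) (fun d => g d.edge)]
    rw [Finset.mul_sum]
    refine Finset.sum_congr rfl fun e he => ?_
    have hcard : (Finset.filter (fun d : G.Dart => d.edge = e) univ).card = 2 :=
      G.dart_edge_fiber_card e (mem_edgeFinset.mp he)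
    calc ∑ d ∈ Finset.filter (fun d : G.Dart => d.edge = e) univ, g d.edge
        = ∑ d ∈ Finset.filter (fun d : G.Dart => d.edge = e) univ, g e :=
          Finset.sum_congr rfl fun d hd => by rw [(Finset.mem_filter.mp hd).2]
      _ = 2 * g e := by rw [Finset.sum_const, hcard]; push_cast; ring
  have h2 : ∑ d : G.Dart, g d.edge = ∑ v, ∑ w ∈ G.neighborFinset v, g s(v, w) := by
    rw [← Finset.sum_fiberwise_of_maps_to (g := fun d : G.Dart => d.fst) (t := univ)
      (fun d _ => mem_univ _) (fun d => g d.edge)]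
    refine Finset.sum_congr rfl fun v _ => ?_
    refine Finset.sum_bij' (fun d _ => d.snd)
      (fun w hw => (⟨(v, w), (G.mem_neighborFinset v w).mp hw⟩ : G.Dart)) ?_ ?_ ?_ ?_ ?_
    · intro d hd
      have h := (Finset.mem_filter.mp hd).2
      rw [G.mem_neighborFinset]
      have := d.adj
      rwa [h] at this
    · intro w hw
      simp
    · intro d hd
      have h := (Finset.mem_filter.mp hd).2
      ext <;> simp [h.symm]
    · intro w hw
      rfl
    · intro d hd
      have h := (Finset.mem_filter.mp hd).2
      have h2 : d.toProd = (v, d.toProd.2) := by rw [← h]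
      rw [SimpleGraph.Dart.edge, h2]
  rw [← h1, h2]

variable {R : Type*} [CommRing R] [Fintype R] [DecidableEq R]

noncomputable def auxUnitsEq : Rˣ ≃ {x : R // IsUnit x} where
  toFun u := ⟨u, u.isUnit⟩
  invFun x := x.2.unit
  left_inv _ := Units.ext rfl
  right_inv x := Subtype.ext x.2.unit_spec

lemma aux_card_filter_isUnit :
    (univ.filter (fun x : R => IsUnit x)).card = Fintype.card Rˣ := by
  rw [Fintype.card_congr (auxUnitsEq (R := R)), Fintype.card_subtype]

lemma aux_card_shift (x : R) :
    (univ.filter (fun y : R => IsUnit (x + y))).card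
      = (univ.filter (fun y : R => IsUnit y)).card := by
  apply Finset.card_equiv (Equiv.addLeft x)
  intro y
  simp

lemma aux_unitGraph_neighborFinset (x : R) :
    (unitGraph R).neighborFinset x
      = (univ.filter (fun y : R => IsUnit (x + y))).erase x := by
  ext y
  simp only [SimpleGraph.mem_neighborFinset, Finset.mem_erase, Finset.mem_filter, mem_univ,
    true_and]
  show (x ≠ y ∧ IsUnit (x + y)) ↔ _
  exact ⟨fun ⟨h1, h2⟩ => ⟨h1.symm, h2⟩, fun ⟨h1, h2⟩ => ⟨h1.symm, h2⟩⟩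

lemma aux_unitGraph_degree (h2 : IsUnit (2 : R)) (x : R) :
    (unitGraph R).degree x =
      if IsUnit x then (univ.filter (fun y : R => IsUnit y)).card - 1
      else (univ.filter (fun y : R => IsUnit y)).card := by
  rw [SimpleGraph.degree, aux_unitGraph_neighborFinset]
  have hmem : x ∈ univ.filter (fun y : R => IsUnit (x + y)) ↔ IsUnit x := by
    simp only [Finset.mem_filter, mem_univ, true_and, ← two_mul]
    exact ⟨fun h => isUnit_of_mul_isUnit_right h, fun h => h2.mul h⟩
  by_cases hx : IsUnit x
  · rw [if_pos hx, Finset.card_erase_of_mem (hmem.mpr hx), aux_card_shift]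
  · rw [if_neg hx, Finset.erase_eq_of_notMem (fun h => hx (hmem.mp h)), aux_card_shift]

end Aux

section AuxZMod

variable (p α : ℕ) [Fact p.Prime] (hα : 1 ≤ α)
include hα

noncomputable def auxFz (hα : 1 ≤ α) : ZMod (p ^ α) →+* ZMod p :=
  ZMod.castHom (dvd_pow_self p (Nat.one_le_iff_ne_zero.mp hα)) (ZMod p)

lemma aux_isUnit_iff_fz (x : ZMod (p ^ α)) : IsUnit x ↔ auxFz p α hα x ≠ 0 := by
  have : NeZero (p ^ α) := ⟨pow_ne_zero _ (Fact.out (p := p.Prime)).pos.ne'⟩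
  have hp := Fact.out (p := p.Prime)
  have hfx : auxFz p α hα x = ((x.val : ℕ) : ZMod p) := by
    rw [auxFz, ZMod.castHom_apply, ← ZMod.natCast_val]
  rw [hfx, Ne, ZMod.natCast_eq_zero_iff]
  conv_lhs => rw [← ZMod.natCast_zmod_val x]
  rw [ZMod.isUnit_iff_coprime,
    Nat.coprime_pow_right_iff (Nat.pos_of_ne_zero (Nat.one_le_iff_ne_zero.mp hα)),
    Nat.coprime_comm, hp.coprime_iff_not_dvd]

omit [Fact p.Prime] hα in
lemma aux_two_isUnit (hp : Odd p) : IsUnit (2 : ZMod (p ^ α)) := by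
  have : ((2 : ℕ) : ZMod (p ^ α)) = 2 := by push_cast; ring
  rw [← this, ZMod.isUnit_iff_coprime]
  exact Nat.Coprime.pow_right _ (Nat.coprime_two_left.mpr hp)

lemma aux_add_nonunit {x y : ZMod (p ^ α)} (hx : ¬ IsUnit x) (hy : ¬ IsUnit y) :
    ¬ IsUnit (x + y) := by
  rw [aux_isUnit_iff_fz p α hα] at hx hy ⊢
  push_neg at hx hy ⊢
  rw [map_add, hx, hy, add_zero]

lemma aux_add_unit {x y : ZMod (p ^ α)} (hx : IsUnit x) (hy : ¬ IsUnit y) :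
    IsUnit (x + y) := by
  rw [aux_isUnit_iff_fz p α hα] at hx ⊢
  rw [aux_isUnit_iff_fz p α hα, not_ne_iff] at hy
  rw [map_add, hy, add_zero]
  exact hx

end AuxZMod

theorem sombor_unit_graph_odd_prime_power (p α : ℕ) [Fact p.Prime] (hp : Odd p)
    (hα : 1 ≤ α) :
    let φ : ℝ := (Nat.totient (p ^ α) : ℝ)
    somborIndex (unitGraph (ZMod (p ^ α))) =
      φ * ((p ^ α : ℝ) - φ) * Real.sqrt (φ ^ 2 + (φ - 1) ^ 2) +
        φ * (φ - 1 - ((p ^ α : ℝ) - φ)) * (φ - 1) / Real.sqrt 2 := by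
  intro φ
  classical
  have hpp := Fact.out (p := p.Prime)
  have hα0 : α ≠ 0 := Nat.one_le_iff_ne_zero.mp hα
  haveI : Fact (1 < p ^ α) := ⟨Nat.one_lt_pow hα0 hpp.one_lt⟩
  set G := unitGraph (ZMod (p ^ α)) with hG
  set φn : ℕ := Nat.totient (p ^ α) with hφn
  have hcardR : Fintype.card (ZMod (p ^ α)) = p ^ α := ZMod.card _
  have hUcard : (univ.filter (fun x : ZMod (p ^ α) => IsUnit x)).card = φn := by
    rw [aux_card_filter_isUnit, ZMod.card_units_eq_totient]
  have hNUcard : (univ.filter (fun x : ZMod (p ^ α) => ¬ IsUnit x)).card = p ^ α - φn := by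
    have h := Finset.card_filter_add_card_filter_not
      (s := (univ : Finset (ZMod (p ^ α)))) (p := fun x => IsUnit x)
    rw [hUcard, Finset.card_univ, hcardR] at h
    omega
  have h2u : IsUnit (2 : ZMod (p ^ α)) := aux_two_isUnit p α hp
  have hφ1 : 1 ≤ φn := Nat.totient_pos.mpr (pow_pos hpp.pos α)
  have hφn_le : φn ≤ p ^ α := Nat.totient_le _
  have hdeg : ∀ x : ZMod (p ^ α), G.degree x = if IsUnit x then φn - 1 else φn := by
    intro x
    rw [hG, aux_unitGraph_degree h2u, hUcard]
  -- the real constants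
  set ψ : ℝ := φ - 1 with hψ
  set A : ℝ := Real.sqrt (φ ^ 2 + ψ ^ 2) with hA
  set B : ℝ := Real.sqrt (ψ ^ 2 + ψ ^ 2) with hB
  have hψ0 : 0 ≤ ψ := by
    rw [hψ]
    simp only [sub_nonneg, φ]
    exact_mod_cast hφ1
  have hcast_deg_unit : ((φn - 1 : ℕ) : ℝ) = ψ := by
    rw [hψ]; push_cast [hφ1]; ring
  have hcast_nu : ((p ^ α - φn : ℕ) : ℝ) = ((p ^ α : ℕ) : ℝ) - φ := by
    rw [Nat.cast_sub hφn_le]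
  -- degree real versions
  have hDu : ∀ x : ZMod (p ^ α), IsUnit x → ((G.degree x : ℝ)) = ψ := by
    intro x hx; rw [hdeg x, if_pos hx, hcast_deg_unit]
  have hDnu : ∀ x : ZMod (p ^ α), ¬ IsUnit x → ((G.degree x : ℝ)) = φ := by
    intro x hx; rw [hdeg x, if_neg hx]
  -- the summand
  set g : Sym2 (ZMod (p ^ α)) → ℝ := Sym2.lift ⟨fun u v =>
      Real.sqrt ((G.degree u : ℝ) ^ 2 + (G.degree v : ℝ) ^ 2),
      fun u v => by dsimp only; rw [add_comm]⟩ with hg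
  have hmain : 2 * somborIndex G = ∑ v, ∑ w ∈ G.neighborFinset v, g s(v, w) := by
    rw [somborIndex]
    exact aux_sum_edgeFinset_two_mul G g
  have hgmk : ∀ v w : ZMod (p ^ α), g s(v, w)
      = Real.sqrt ((G.degree v : ℝ) ^ 2 + (G.degree w : ℝ) ^ 2) := by
    intro v w; rw [hg, Sym2.lift_mk]
  have hadj_iff : ∀ v w : ZMod (p ^ α), G.Adj v w ↔ v ≠ w ∧ IsUnit (v + w) := by
    intro v w; rw [hG]; rfl
  -- inner sum for non-units
  have hInner_nu : ∀ v : ZMod (p ^ α), ¬ IsUnit v →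
      ∑ w ∈ G.neighborFinset v, g s(v, w) = (φn : ℝ) * A := by
    intro v hv
    have hconst : ∀ w ∈ G.neighborFinset v, g s(v, w) = A := by
      intro w hw
      have hadj := (G.mem_neighborFinset v w).mp hw
      have hvw : IsUnit (v + w) := ((hadj_iff v w).mp hadj).2
      have hw_unit : IsUnit w := by
        by_contra hwu
        exact aux_add_nonunit p α hα hv hwu hvw
      rw [hgmk, hDnu v hv, hDu w hw_unit, hA]
    rw [Finset.sum_congr rfl hconst, Finset.sum_const]
    have hd : (G.neighborFinset v).card = φn := by
      rw [← SimpleGraph.degree, hdeg v, if_neg hv]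
    rw [hd, nsmul_eq_mul]
  -- inner sum for units
  have hInner_u : ∀ v : ZMod (p ^ α), IsUnit v →
      ∑ w ∈ G.neighborFinset v, g s(v, w)
        = (((p ^ α : ℕ) : ℝ) - φ) * A + (ψ - (((p ^ α : ℕ) : ℝ) - φ)) * B := by
    intro v hv
    rw [← Finset.sum_filter_add_sum_filter_not (G.neighborFinset v) (fun w => IsUnit w)]
    have hfil_nu : (G.neighborFinset v).filter (fun w => ¬ IsUnit w)
        = univ.filter (fun w : ZMod (p ^ α) => ¬ IsUnit w) := by
      ext w
      simp only [Finset.mem_filter, Finset.mem_univ, true_and, SimpleGraph.mem_neighborFinset]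
      constructor
      · rintro ⟨_, h⟩; exact h
      · intro hw
        refine ⟨(hadj_iff v w).mpr ⟨?_, aux_add_unit p α hα hv hw⟩, hw⟩
        rintro rfl; exact hw hv
    have hsum_nu : ∑ w ∈ (G.neighborFinset v).filter (fun w => ¬ IsUnit w), g s(v, w)
        = (((p ^ α : ℕ) : ℝ) - φ) * A := by
      have hconst : ∀ w ∈ (G.neighborFinset v).filter (fun w => ¬ IsUnit w), g s(v, w) = A := by
        intro w hw
        have hw' := (Finset.mem_filter.mp hw).2
        rw [hgmk, hDu v hv, hDnu w hw', hA, add_comm]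
      rw [Finset.sum_congr rfl hconst, Finset.sum_const, hfil_nu, hNUcard, nsmul_eq_mul,
        hcast_nu]
    have hsum_u : ∑ w ∈ (G.neighborFinset v).filter (fun w => IsUnit w), g s(v, w)
        = (ψ - (((p ^ α : ℕ) : ℝ) - φ)) * B := by
      have hconst : ∀ w ∈ (G.neighborFinset v).filter (fun w => IsUnit w), g s(v, w) = B := by
        intro w hw
        have hw' := (Finset.mem_filter.mp hw).2
        rw [hgmk, hDu v hv, hDu w hw', hB]
      rw [Finset.sum_congr rfl hconst, Finset.sum_const, nsmul_eq_mul]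
      congr 1
      -- cardinality of unit neighbors
      have hcc := Finset.card_filter_add_card_filter_not
        (s := G.neighborFinset v) (p := fun w => IsUnit w)
      rw [hfil_nu, hNUcard] at hcc
      have hdv : (G.neighborFinset v).card = φn - 1 := by
        rw [← SimpleGraph.degree, hdeg v, if_pos hv]
      rw [hdv] at hcc
      have h1 : (((G.neighborFinset v).filter (fun w => IsUnit w)).card : ℝ)
          + ((p ^ α - φn : ℕ) : ℝ) = ((φn - 1 : ℕ) : ℝ) := by exact_mod_cast hcc
      rw [hcast_nu, hcast_deg_unit] at h1
      linarith
    rw [hsum_nu, hsum_u]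
    ring
  -- outer sum
  have houter : ∑ v, ∑ w ∈ G.neighborFinset v, g s(v, w)
      = φ * ((((p ^ α : ℕ) : ℝ) - φ) * A + (ψ - (((p ^ α : ℕ) : ℝ) - φ)) * B)
        + (((p ^ α : ℕ) : ℝ) - φ) * ((φn : ℝ) * A) := by
    rw [← Finset.sum_filter_add_sum_filter_not univ (fun v : ZMod (p ^ α) => IsUnit v)]
    have h1 : ∑ v ∈ univ.filter (fun v : ZMod (p ^ α) => IsUnit v),
        ∑ w ∈ G.neighborFinset v, g s(v, w)
        = φ * ((((p ^ α : ℕ) : ℝ) - φ) * A + (ψ - (((p ^ α : ℕ) : ℝ) - φ)) * B) := by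
      rw [Finset.sum_congr rfl (fun v hv => hInner_u v (Finset.mem_filter.mp hv).2),
        Finset.sum_const, hUcard, nsmul_eq_mul]
    have h2 : ∑ v ∈ univ.filter (fun v : ZMod (p ^ α) => ¬ IsUnit v),
        ∑ w ∈ G.neighborFinset v, g s(v, w)
        = (((p ^ α : ℕ) : ℝ) - φ) * ((φn : ℝ) * A) := by
      rw [Finset.sum_congr rfl (fun v hv => hInner_nu v (Finset.mem_filter.mp hv).2),
        Finset.sum_const, hNUcard, nsmul_eq_mul, hcast_nu]
    rw [h1, h2]
  -- final algebra
  have hs2 : Real.sqrt 2 * Real.sqrt 2 = 2 := Real.mul_self_sqrt (by norm_num)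
  have hs0 : Real.sqrt 2 ≠ 0 := by positivity
  have hBval : B = Real.sqrt 2 * ψ := by
    rw [hB, show ψ ^ 2 + ψ ^ 2 = 2 * ψ ^ 2 by ring, Real.sqrt_mul (by norm_num),
      Real.sqrt_sq hψ0]
  have hφφn : (φn : ℝ) = φ := rfl
  have hnn : ((p ^ α : ℕ) : ℝ) = (p ^ α : ℝ) := by push_cast; ring
  refine mul_left_cancel₀ (two_ne_zero) ?_
  rw [hmain, houter, hBval, hφφn, hnn]
  have hdiv : ∀ x : ℝ, x / Real.sqrt 2 = x * Real.sqrt 2 / 2 := by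
    intro x
    rw [div_eq_div_iff hs0 (two_ne_zero), mul_assoc, hs2]
  rw [hdiv]
  ring
end

section
/- Let p < q be odd primes. Then the Sombor index of the unit graph of ℤ_{p²q} satisfies SO(G(ℤ_{p²q})) = √2·α·φ(p²q) + β·√(φ(p²q)² + (φ(p²q) − 1)²) + √2·(|E| − α − β)·(φ(p²q) − 1), where α = p²(p−1)(q−1), β = p²(p−1)(q−1)(p + q − 3), and |E| = p(p−1)(q−1)(p²q − 1)/2 is the number of edges of G(ℤ_{p²q}). -/
open scoped Classical

namespace SomborAux
open Finset


variable (n : ℕ) [NeZero n]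

noncomputable def uc : ℕ := (univ.filter (fun x : ZMod n => IsUnit x)).card

noncomputable def hfun (x : ZMod n) : ℕ :=
  (univ.filter (fun y : ZMod n => IsUnit (x + y) ∧ IsUnit y)).card

lemma uc_eq_totient : uc n = n.totient := by
  rw [← ZMod.card_units_eq_totient n, uc, ← Fintype.card_subtype]
  refine Fintype.card_congr ?_
  exact {
    toFun := fun x => x.2.unit
    invFun := fun u => ⟨↑u, u.isUnit⟩
    left_inv := fun x => Subtype.ext x.2.unit_spec
    right_inv := fun u => Units.ext u.isUnit.unit_spec }

lemma shift_card (x : ZMod n) :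
    (univ.filter (fun y : ZMod n => IsUnit (x + y))).card = uc n := by
  apply Finset.card_nbij' (fun y => x + y) (fun z => z - x)
  · intro y hy; simp only [mem_coe, mem_filter, mem_univ, true_and] at *; exact hy
  · intro z hz; simp only [mem_coe, mem_filter, mem_univ, true_and] at *; simpa using hz
  · intro y _; ring
  · intro z _; ring

lemma shift_card' (y : ZMod n) :
    (univ.filter (fun x : ZMod n => IsUnit (x + y))).card = uc n := by
  simp_rw [add_comm]; exact shift_card n y

lemma hfun_unit {x : ZMod n} (hx : IsUnit x) : hfun n x = hfun n 1 := by
  obtain ⟨w, rfl⟩ := hx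
  apply Finset.card_nbij' (fun y => ((w⁻¹ : (ZMod n)ˣ) : ZMod n) * y)
    (fun z => ((w : ZMod n)) * z)
  · intro y hy
    simp only [mem_coe, mem_filter, mem_univ, true_and] at *
    obtain ⟨h1, h2⟩ := hy
    refine ⟨?_, (Units.isUnit w⁻¹).mul h2⟩
    have : (1 : ZMod n) + ((w⁻¹ : (ZMod n)ˣ) : ZMod n) * y
        = ((w⁻¹ : (ZMod n)ˣ) : ZMod n) * ((w : ZMod n) + y) := by
      rw [mul_add]
      simp
    rw [this]
    exact (Units.isUnit w⁻¹).mul h1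
  · intro z hz
    simp only [mem_coe, mem_filter, mem_univ, true_and] at *
    obtain ⟨h1, h2⟩ := hz
    refine ⟨?_, (Units.isUnit w).mul h2⟩
    have : (w : ZMod n) + (w : ZMod n) * z = (w : ZMod n) * (1 + z) := by ring
    rw [this]
    exact (Units.isUnit w).mul h1
  · intro y _; simp [← mul_assoc]
  · intro z _; simp [← mul_assoc]

lemma hfun_sum : ∑ x : ZMod n, hfun n x = uc n * uc n := by
  have h1 : ∀ x : ZMod n, hfun n x
      = ∑ y : ZMod n, if IsUnit (x + y) ∧ IsUnit y then 1 else 0 := by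
    intro x; rw [hfun, Finset.card_filter]
  simp only [h1]
  rw [Finset.sum_comm]
  have inner : ∀ y : ZMod n,
      (∑ x : ZMod n, if IsUnit (x + y) ∧ IsUnit y then 1 else 0) =
        if IsUnit y then uc n else 0 := by
    intro y
    by_cases hy : IsUnit y
    · simp only [hy, and_true, if_pos]
      rw [← Finset.card_filter, shift_card' n y]
    · simp [hy]
  simp only [inner]
  rw [← Finset.sum_filter, Finset.sum_const, smul_eq_mul, uc]

lemma deg_filter {V : Type*} [Fintype V] (G : SimpleGraph V) [∀ v, Fintype (G.neighborSet v)]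
    (x : V) : G.degree x = (univ.filter (G.Adj x)).card := by
  classical
  unfold SimpleGraph.degree
  rw [show G.neighborFinset x = univ.filter (G.Adj x) from by ext y; simp]


def G0 (R : Type*) [CommRing R] : SimpleGraph R where
  Adj x y := x ≠ y ∧ IsUnit (x + y) ∧ ¬ IsUnit x ∧ ¬ IsUnit y
  symm := ⟨fun x y ⟨h1, h2, h3, h4⟩ => ⟨h1.symm, by rwa [add_comm], h4, h3⟩⟩
  loopless := ⟨fun x h => h.1 rfl⟩

def G1 (R : Type*) [CommRing R] : SimpleGraph R where
  Adj x y := x ≠ y ∧ IsUnit (x + y) ∧ ¬ (IsUnit x ↔ IsUnit y)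
  symm := ⟨fun x y ⟨h1, h2, h3⟩ => ⟨h1.symm, by rwa [add_comm], fun hiff => h3 hiff.symm⟩⟩
  loopless := ⟨fun x h => h.1 rfl⟩

variable (n : ℕ) [NeZero n]

lemma unit_add_self (h2 : IsUnit (2 : ZMod n)) {x : ZMod n} : IsUnit (x + x) ↔ IsUnit x := by
  rw [← two_mul, (Commute.all _ _).isUnit_mul_iff]
  exact ⟨fun h => h.2, fun h => ⟨h2, h⟩⟩

lemma deg_unitGraph (h2 : IsUnit (2 : ZMod n)) (x : ZMod n) :
    (unitGraph (ZMod n)).degree x = if IsUnit x then uc n - 1 else uc n := by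
  rw [deg_filter]
  have he : (univ.filter ((unitGraph (ZMod n)).Adj x))
      = (univ.filter (fun y : ZMod n => IsUnit (x + y))).erase x := by
    ext y
    simp only [mem_erase, mem_filter, mem_univ, true_and]; simp only [unitGraph]
    tauto
  rw [he]
  by_cases hx : IsUnit x
  · have hmem : x ∈ univ.filter (fun y : ZMod n => IsUnit (x + y)) := by
      simp only [mem_filter, mem_univ, true_and]
      exact (unit_add_self n h2).mpr hx
    rw [if_pos hx, Finset.card_erase_of_mem hmem, shift_card]
  · have hmem : x ∉ univ.filter (fun y : ZMod n => IsUnit (x + y)) := by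
      simp only [mem_filter, mem_univ, true_and]
      exact fun h => hx ((unit_add_self n h2).mp h)
    rw [if_neg hx, Finset.erase_eq_of_notMem hmem, shift_card]

lemma deg_G0 (h2 : IsUnit (2 : ZMod n)) (x : ZMod n) :
    (G0 (ZMod n)).degree x =
      if IsUnit x then 0
      else (univ.filter (fun y : ZMod n => IsUnit (x + y) ∧ ¬ IsUnit y)).card := by
  rw [deg_filter]
  by_cases hx : IsUnit x
  · rw [if_pos hx]
    rw [Finset.card_eq_zero]
    ext y
    simp [G0, hx]
  · rw [if_neg hx]
    congr 1
    ext y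
    simp only [mem_filter, mem_univ, true_and]; simp only [G0]
    constructor
    · tauto
    · rintro ⟨h1, hy⟩
      refine ⟨?_, h1, hx, hy⟩
      rintro rfl
      exact hx ((unit_add_self n h2).mp h1)

lemma deg_G1 (x : ZMod n) :
    (G1 (ZMod n)).degree x =
      if IsUnit x then (univ.filter (fun y : ZMod n => IsUnit (x + y) ∧ ¬ IsUnit y)).card
      else hfun n x := by
  rw [deg_filter]
  by_cases hx : IsUnit x
  · rw [if_pos hx]
    congr 1
    ext y
    simp only [mem_filter, mem_univ, true_and]; simp only [G1]
    constructor
    · tauto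
    · rintro ⟨h1, hy⟩
      exact ⟨by rintro rfl; exact hy hx, h1, by simp [hx, hy]⟩
  · rw [if_neg hx, hfun]
    congr 1
    ext y
    simp only [mem_filter, mem_univ, true_and]; simp only [G1]
    constructor
    · tauto
    · rintro ⟨h1, hy⟩
      exact ⟨by rintro rfl; exact hx hy, h1, by simp [hx, hy]⟩

lemma split_card (x : ZMod n) :
    (univ.filter (fun y : ZMod n => IsUnit (x + y) ∧ ¬ IsUnit y)).card + hfun n x = uc n := by
  rw [← shift_card n x, hfun]
  rw [show (univ.filter (fun y : ZMod n => IsUnit (x + y) ∧ ¬ IsUnit y))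
      = (univ.filter (fun y : ZMod n => IsUnit (x + y))).filter (fun y => ¬ IsUnit y) from by
    rw [Finset.filter_filter]]
  rw [show (univ.filter (fun y : ZMod n => IsUnit (x + y) ∧ IsUnit y))
      = (univ.filter (fun y : ZMod n => IsUnit (x + y))).filter (fun y => IsUnit y) from by
    rw [Finset.filter_filter]]
  rw [add_comm]
  exact Finset.card_filter_add_card_filter_not _

lemma edgeFinset_G0 :
    (G0 (ZMod n)).edgeFinset =
      (unitGraph (ZMod n)).edgeFinset.filter (fun e => ∀ v ∈ e, ¬ IsUnit v) := by
  ext e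
  induction e using Sym2.ind with
  | _ x y =>
    simp only [SimpleGraph.mem_edgeFinset, SimpleGraph.mem_edgeSet, mem_filter, Sym2.mem_iff]
    simp only [G0, unitGraph]
    constructor
    · rintro ⟨h1, h2, h3, h4⟩
      exact ⟨⟨h1, h2⟩, by rintro v (rfl | rfl) <;> assumption⟩
    · rintro ⟨⟨h1, h2⟩, h⟩
      exact ⟨h1, h2, h x (Or.inl rfl), h y (Or.inr rfl)⟩

lemma edgeFinset_G1 :
    (G1 (ZMod n)).edgeFinset =
      (unitGraph (ZMod n)).edgeFinset.filter
        (fun e => ¬ (∀ v ∈ e, ¬ IsUnit v) ∧ ¬ (∀ v ∈ e, IsUnit v)) := by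
  ext e
  induction e using Sym2.ind with
  | _ x y =>
    simp only [SimpleGraph.mem_edgeFinset, SimpleGraph.mem_edgeSet, mem_filter, Sym2.mem_iff]
    simp only [G1, unitGraph]
    constructor
    · rintro ⟨h1, h2, h3⟩
      refine ⟨⟨h1, h2⟩, ?_, ?_⟩ <;> by_cases hx : IsUnit x <;> by_cases hy : IsUnit y <;>
        simp [hx, hy] at h3 ⊢ <;> tauto
    · rintro ⟨⟨h1, h2⟩, h3, h4⟩
      refine ⟨h1, h2, ?_⟩
      by_cases hx : IsUnit x <;> by_cases hy : IsUnit y <;> simp [hx, hy] at h3 h4 ⊢ <;> tauto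


lemma fiber_count {A B : Type*} [Fintype A] [Fintype B] [AddCommGroup A] [AddCommGroup B]
    (f : A → B) (hadd : ∀ x y, f (x + y) = f x + f y) (hf : Function.Surjective f)
    (T : Finset B) :
    (univ.filter (fun a => f a ∈ T)).card * Fintype.card B = T.card * Fintype.card A := by
  classical
  have key : ∀ x y : A, f (x - y) = f x - f y := by
    intro x y
    have h0 : f ((x - y) + y) = f (x - y) + f y := hadd _ _
    rw [sub_add_cancel] at h0
    rw [h0]; abel
  set fib : B → ℕ := fun b => (univ.filter (fun a => f a = b)).card with hfib
  have hconst : ∀ b, fib b = fib 0 := by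
    intro b
    obtain ⟨a₀, ha₀⟩ := hf b
    apply Finset.card_nbij' (fun a => a - a₀) (fun a => a + a₀)
    · intro a ha
      simp only [mem_coe, mem_filter, mem_univ, true_and] at *
      rw [key, ha, ha₀, sub_self]
    · intro a ha
      simp only [mem_coe, mem_filter, mem_univ, true_and] at *
      rw [hadd, ha, ha₀, zero_add]
    · intro a _; simp
    · intro a _; simp
  have h1 : (univ.filter (fun a => f a ∈ T)).card = ∑ b ∈ T, fib b := by
    rw [Finset.card_eq_sum_card_fiberwise
      (f := f) (t := T) (fun a ha => by simpa using (Finset.mem_filter.mp ha).2)]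
    refine Finset.sum_congr rfl fun b hb => ?_
    congr 1
    ext a
    simp only [mem_filter, mem_univ, true_and, and_iff_right_iff_imp]
    intro h
    rw [h]
    exact hb
  have h2 : Fintype.card A = ∑ b ∈ (univ : Finset B), fib b := by
    rw [← Finset.card_univ]
    apply Finset.card_eq_sum_card_fiberwise
    intro a _; exact mem_univ _
  rw [h1, h2]
  rw [Finset.sum_congr rfl (fun b _ => hconst b), Finset.sum_congr rfl (fun b _ => hconst b),
    Finset.sum_const, Finset.sum_const, smul_eq_mul, smul_eq_mul, card_univ]
  ring

section PQ
variable (p q : ℕ) [Fact p.Prime] [Fact q.Prime] (hp : Odd p) (hq : Odd q) (hpq : p < q)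

lemma n_ne_zero : NeZero (p ^ 2 * q) := by
  constructor
  have h1 : 0 < p := (Fact.out : p.Prime).pos
  have h2 : 0 < q := (Fact.out : q.Prime).pos
  positivity

-- test instances
example : NeZero p := inferInstance
example (z : ZMod (p^2*q)) : True := trivial

lemma dvd_p : p ∣ p ^ 2 * q := Dvd.dvd.mul_right (dvd_pow_self p two_ne_zero) q
lemma dvd_q : q ∣ p ^ 2 * q := Dvd.dvd.mul_left dvd_rfl _

include hpq in
lemma cop_pq : Nat.Coprime p q :=
  (Nat.coprime_primes (Fact.out) (Fact.out)).mpr (Nat.ne_of_lt hpq)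

-- unit characterization
lemma unit_iff (z : ZMod (p ^ 2 * q)) :
    haveI := n_ne_zero p q
    IsUnit z ↔ (ZMod.castHom (dvd_p p q) (ZMod p) z ≠ 0 ∧
      ZMod.castHom (dvd_q p q) (ZMod q) z ≠ 0) := by
  haveI := n_ne_zero p q
  have hz : z = ((z.val : ℕ) : ZMod (p ^ 2 * q)) := by simp [ZMod.natCast_val, ZMod.cast_id]
  rw [ZMod.castHom_apply, ZMod.castHom_apply, ← ZMod.natCast_val, ← ZMod.natCast_val]
  conv_lhs => rw [hz]
  rw [ZMod.isUnit_iff_coprime]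
  rw [Nat.coprime_mul_iff_right]
  rw [Nat.coprime_pow_right_iff (by norm_num)]
  rw [Nat.coprime_comm (m := p) (n := z.val), Nat.coprime_comm (m := q) (n := z.val)]
  rw [Nat.Prime.coprime_iff_not_dvd Fact.out, Nat.Prime.coprime_iff_not_dvd Fact.out]
  rw [← ZMod.natCast_eq_zero_iff, ← ZMod.natCast_eq_zero_iff]
end PQ

section PQ2
variable (p q : ℕ) [Fact p.Prime] [Fact q.Prime] (hp : Odd p) (hq : Odd q) (hpq : p < q)

noncomputable def gmap : ZMod (p ^ 2 * q) → ZMod p × ZMod q :=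
  fun z => (ZMod.castHom (dvd_p p q) (ZMod p) z, ZMod.castHom (dvd_q p q) (ZMod q) z)

lemma gmap_add (x y : ZMod (p ^ 2 * q)) : gmap p q (x + y) = gmap p q x + gmap p q y := by
  simp only [gmap, map_add, Prod.mk_add_mk]

include hpq in
lemma gmap_surj : Function.Surjective (gmap p q) := by
  haveI := n_ne_zero p q
  rintro ⟨a, b⟩
  obtain ⟨k, hk1, hk2⟩ := Nat.chineseRemainder (cop_pq p q hpq) a.val b.val
  refine ⟨(k : ZMod (p ^ 2 * q)), ?_⟩
  simp only [gmap, Prod.ext_iff, map_natCast]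
  constructor
  · rw [ZMod.natCast_eq_natCast_iff _ _ _ |>.mpr hk1]
    simp [ZMod.natCast_val, ZMod.cast_id]
  · rw [ZMod.natCast_eq_natCast_iff _ _ _ |>.mpr hk2]
    simp [ZMod.natCast_val, ZMod.cast_id]

noncomputable def Tset : Finset (ZMod p × ZMod q) :=
  ((univ : Finset (ZMod p)) \ {0, -1}) ×ˢ ((univ : Finset (ZMod q)) \ {0, -1})

include hp in
lemma card_sp : ((univ : Finset (ZMod p)) \ {0, -1}).card = p - 2 := by
  have hp2 : (2:ℕ) < p := by
    have := (Fact.out : p.Prime).two_le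
    rcases Nat.lt_or_ge 2 p with h | h
    · exact h
    · interval_cases p
      · exact absurd hp (by decide)
  have hne : (0 : ZMod p) ≠ -1 := by
    intro h
    have : (1 : ZMod p) = 0 := by linear_combination h
    exact one_ne_zero this
  rw [Finset.card_sdiff_of_subset (by simp)]
  rw [Finset.card_univ, ZMod.card]
  congr 1
  rw [Finset.card_insert_of_notMem (by simpa using hne), Finset.card_singleton]

include hp hq hpq in
lemma hfun_one_val :
    haveI := n_ne_zero p q
    hfun (p ^ 2 * q) 1 = p * (p - 2) * (q - 2) := by
  haveI := n_ne_zero p q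
  have key := fiber_count (gmap p q) (gmap_add p q) (gmap_surj p q hpq) (Tset p q)
  have hmem : ∀ z : ZMod (p ^ 2 * q),
      (IsUnit (1 + z) ∧ IsUnit z) ↔ gmap p q z ∈ Tset p q := by
    intro z
    have e1 : ∀ w : ZMod p, 1 + w = 0 ↔ w = -1 := fun w =>
      ⟨fun h => by linear_combination h, fun h => by rw [h]; ring⟩
    have e2 : ∀ w : ZMod q, 1 + w = 0 ↔ w = -1 := fun w =>
      ⟨fun h => by linear_combination h, fun h => by rw [h]; ring⟩
    rw [unit_iff p q, unit_iff p q]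
    simp only [Tset, gmap, Finset.mem_product, Finset.mem_sdiff, Finset.mem_univ, true_and,
      Finset.mem_insert, Finset.mem_singleton, map_add, map_one, not_or, ne_eq, e1, e2]
    tauto
  have hcard : hfun (p ^ 2 * q) 1 = (univ.filter (fun z => gmap p q z ∈ Tset p q)).card := by
    rw [hfun]
    congr 1
    ext z
    simp only [Finset.mem_filter, Finset.mem_univ, true_and]
    exact hmem z
  have hT : (Tset p q).card = (p - 2) * (q - 2) := by
    rw [Tset, Finset.card_product, card_sp p hp, card_sp q hq]
  have hB : Fintype.card (ZMod p × ZMod q) = p * q := by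
    rw [Fintype.card_prod, ZMod.card, ZMod.card]
  have hA : Fintype.card (ZMod (p ^ 2 * q)) = p ^ 2 * q := ZMod.card _
  rw [hB, hA, hT] at key
  have hpq0 : 0 < p * q := by
    have := (Fact.out : p.Prime).pos; have := (Fact.out : q.Prime).pos; positivity
  apply Nat.eq_of_mul_eq_mul_right hpq0
  have key2 : hfun (p ^ 2 * q) 1 * (p * q) = (p - 2) * (q - 2) * (p ^ 2 * q) := by
    rw [hcard]
    convert key using 4
  rw [key2]; ring

include hpq in
lemma totient_val : (p ^ 2 * q).totient = p * (p - 1) * (q - 1) := by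
  have cop : Nat.Coprime (p ^ 2) q := (cop_pq p q hpq).pow_left _
  rw [Nat.totient_mul cop, Nat.totient_prime_pow (Fact.out) (by norm_num),
    Nat.totient_prime (Fact.out)]
  ring

end PQ2

end SomborAux

section MainProof
open Finset SomborAux

variable (p q : ℕ) [Fact p.Prime] [Fact q.Prime] (hp : Odd p) (hq : Odd q) (hpq : p < q)

local notation "n" => p ^ 2 * q

include hp hq in
lemma two_unit :
    haveI := n_ne_zero p q
    IsUnit (2 : ZMod n) := by
  haveI := n_ne_zero p q
  have hnodd : Odd n := (hp.pow).mul hq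
  rw [show (2 : ZMod n) = ((2 : ℕ) : ZMod n) by norm_num, ZMod.isUnit_iff_coprime]
  exact Nat.coprime_two_left.mpr hnodd

include hp hq hpq in
lemma counts_main :
    haveI := n_ne_zero p q
    ((unitGraph (ZMod n)).edgeFinset.card : ℝ)
      = (p : ℝ) * ((p : ℝ) - 1) * ((q : ℝ) - 1) * ((p : ℝ) ^ 2 * (q : ℝ) - 1) / 2 ∧
    (((unitGraph (ZMod n)).edgeFinset.filter (fun e => ∀ v ∈ e, ¬ IsUnit v)).card : ℝ)
      = (p : ℝ) ^ 2 * ((p : ℝ) - 1) * ((q : ℝ) - 1) ∧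
    (((unitGraph (ZMod n)).edgeFinset.filter
        (fun e => ¬ (∀ v ∈ e, ¬ IsUnit v) ∧ ¬ (∀ v ∈ e, IsUnit v))).card : ℝ)
      = (p : ℝ) ^ 2 * ((p : ℝ) - 1) * ((q : ℝ) - 1) * ((p : ℝ) + (q : ℝ) - 3) := by
  haveI := n_ne_zero p q
  have hp3 : 3 ≤ p := by
    have h2 := (Fact.out : p.Prime).two_le
    rcases hp with ⟨k, hk⟩; omega
  have hq3 : 3 ≤ q := by
    have h2 := (Fact.out : q.Prime).two_le
    rcases hq with ⟨k, hk⟩; omega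
  have h2 : IsUnit (2 : ZMod n) := two_unit p q hp hq
  -- basic counts
  have huval : uc n = p * (p - 1) * (q - 1) := by
    rw [uc_eq_totient]; exact totient_val p q hpq
  have hcval : hfun n 1 = p * (p - 2) * (q - 2) := hfun_one_val p q hp hq hpq
  have hu1 : 1 ≤ uc n := Finset.card_pos.mpr ⟨1, by simp [mem_filter]⟩
  have hum : uc n + (univ.filter (fun x : ZMod n => ¬ IsUnit x)).card = n := by
    rw [uc, Finset.card_filter_add_card_filter_not, Finset.card_univ, ZMod.card]
  set m := (univ.filter (fun x : ZMod n => ¬ IsUnit x)).card with hm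
  set SN := ∑ x ∈ univ.filter (fun x : ZMod n => ¬ IsUnit x), hfun n x with hSNdef
  have hSU : ∑ x ∈ univ.filter (fun x : ZMod n => IsUnit x), hfun n x = uc n * hfun n 1 := by
    rw [Finset.sum_congr rfl (fun x hx => hfun_unit n ((mem_filter.mp hx).2)),
      Finset.sum_const, smul_eq_mul, uc]
  have hsplitsum : uc n * hfun n 1 + SN = uc n * uc n := by
    rw [← hSU, hSNdef, Finset.sum_filter_add_sum_filter_not]
    exact hfun_sum n
  -- handshake for unitGraph
  have hE : 2 * (unitGraph (ZMod n)).edgeFinset.card + uc n = uc n * uc n + m * uc n := by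
    rw [← SimpleGraph.sum_degrees_eq_twice_card_edges]
    rw [Finset.sum_congr rfl (fun x _ => deg_unitGraph n h2 x)]
    rw [← Finset.sum_filter_add_sum_filter_not univ (fun x : ZMod n => IsUnit x)]
    rw [Finset.sum_congr rfl (fun x hx => if_pos (mem_filter.mp hx).2),
      Finset.sum_congr rfl (fun x hx => if_neg (mem_filter.mp hx).2),
      Finset.sum_const, Finset.sum_const, smul_eq_mul, smul_eq_mul, ← uc, ← hm]
    have e1 : uc n * (uc n - 1) + uc n = uc n * uc n := by
      cases' Nat.exists_eq_add_of_le hu1 with k hk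
      rw [hk, Nat.add_sub_cancel_left]
      ring
    omega
  -- handshake for G0
  have hE0 : 2 * (G0 (ZMod n)).edgeFinset.card + SN = m * uc n := by
    rw [← SimpleGraph.sum_degrees_eq_twice_card_edges]
    rw [Finset.sum_congr rfl (fun x _ => deg_G0 n h2 x)]
    rw [← Finset.sum_filter_add_sum_filter_not univ (fun x : ZMod n => IsUnit x)]
    rw [Finset.sum_congr rfl (fun x hx => if_pos (mem_filter.mp hx).2),
      Finset.sum_congr rfl (fun x hx => if_neg (mem_filter.mp hx).2)]
    rw [Finset.sum_const, smul_eq_mul, mul_zero, zero_add]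
    have key : ∑ x ∈ univ.filter (fun x : ZMod n => ¬ IsUnit x),
        ((univ.filter (fun y : ZMod n => IsUnit (x + y) ∧ ¬ IsUnit y)).card + hfun n x)
          = m * uc n := by
      rw [Finset.sum_congr rfl (fun x _ => split_card n x), Finset.sum_const, smul_eq_mul]
    rw [Finset.sum_add_distrib] at key
    omega
  -- handshake for G1
  have hE1 : 2 * (G1 (ZMod n)).edgeFinset.card + uc n * hfun n 1 = uc n * uc n + SN := by
    rw [← SimpleGraph.sum_degrees_eq_twice_card_edges]
    rw [Finset.sum_congr rfl (fun x _ => deg_G1 n x)]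
    rw [← Finset.sum_filter_add_sum_filter_not univ (fun x : ZMod n => IsUnit x)]
    rw [Finset.sum_congr rfl (fun x hx => if_pos (mem_filter.mp hx).2),
      Finset.sum_congr rfl (fun x hx => if_neg (mem_filter.mp hx).2)]
    have key : ∑ x ∈ univ.filter (fun x : ZMod n => IsUnit x),
        ((univ.filter (fun y : ZMod n => IsUnit (x + y) ∧ ¬ IsUnit y)).card + hfun n x)
          = uc n * uc n := by
      rw [Finset.sum_congr rfl (fun x _ => split_card n x), Finset.sum_const, smul_eq_mul, uc]
    rw [Finset.sum_add_distrib] at key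
    simp only [← hSNdef]
    omega
  -- cast to ℝ
  have RU : ((uc n : ℕ) : ℝ) = (p : ℝ) * ((p : ℝ) - 1) * ((q : ℝ) - 1) := by
    rw [huval]
    push_cast [Nat.cast_sub (by omega : 1 ≤ p), Nat.cast_sub (by omega : 1 ≤ q)]
    ring
  have RC : ((hfun n 1 : ℕ) : ℝ) = (p : ℝ) * ((p : ℝ) - 2) * ((q : ℝ) - 2) := by
    rw [hcval]
    push_cast [Nat.cast_sub (by omega : 2 ≤ p), Nat.cast_sub (by omega : 2 ≤ q)]
    ring
  have RM : (m : ℝ) = (p : ℝ) ^ 2 * (q : ℝ) - (uc n : ℝ) := by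
    have : ((uc n : ℕ) : ℝ) + (m : ℝ) = ((p : ℝ)) ^ 2 * (q : ℝ) := by
      exact_mod_cast congrArg (Nat.cast : ℕ → ℝ) hum
    linarith
  have REr : 2 * ((unitGraph (ZMod n)).edgeFinset.card : ℝ) + (uc n : ℝ)
      = (uc n : ℝ) * (uc n : ℝ) + (m : ℝ) * (uc n : ℝ) := by exact_mod_cast hE
  have RSS : (uc n : ℝ) * (hfun n 1 : ℝ) + (SN : ℝ) = (uc n : ℝ) * (uc n : ℝ) := by
    exact_mod_cast hsplitsum
  have RE0 : 2 * ((G0 (ZMod n)).edgeFinset.card : ℝ) + (SN : ℝ) = (m : ℝ) * (uc n : ℝ) := by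
    exact_mod_cast hE0
  have RE1 : 2 * ((G1 (ZMod n)).edgeFinset.card : ℝ) + (uc n : ℝ) * (hfun n 1 : ℝ)
      = (uc n : ℝ) * (uc n : ℝ) + (SN : ℝ) := by exact_mod_cast hE1
  refine ⟨?_, ?_, ?_⟩
  · have h' : ((unitGraph (ZMod n)).edgeFinset.card : ℝ)
        = ((uc n : ℝ) * (uc n : ℝ) + (m : ℝ) * (uc n : ℝ) - (uc n : ℝ)) / 2 := by
      linarith
    rw [RM, RU] at h'
    rw [h']; ring
  · rw [← edgeFinset_G0 n]
    have hSN' : (SN : ℝ) = (uc n : ℝ) * (uc n : ℝ) - (uc n : ℝ) * (hfun n 1 : ℝ) := by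
      linarith
    have h' : ((G0 (ZMod n)).edgeFinset.card : ℝ)
        = ((m : ℝ) * (uc n : ℝ) - ((uc n : ℝ) * (uc n : ℝ)
            - (uc n : ℝ) * (hfun n 1 : ℝ))) / 2 := by
      linarith
    rw [RM, RU, RC] at h'
    rw [h']; ring
  · rw [← edgeFinset_G1 n]
    have hSN' : (SN : ℝ) = (uc n : ℝ) * (uc n : ℝ) - (uc n : ℝ) * (hfun n 1 : ℝ) := by
      linarith
    have h' : ((G1 (ZMod n)).edgeFinset.card : ℝ)
        = ((uc n : ℝ) * (uc n : ℝ) + ((uc n : ℝ) * (uc n : ℝ)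
            - (uc n : ℝ) * (hfun n 1 : ℝ)) - (uc n : ℝ) * (hfun n 1 : ℝ)) / 2 := by
      linarith
    rw [RU, RC] at h'
    rw [h']; ring

end MainProof

open Finset SomborAux

theorem sombor_unit_graph_ppq (p q : ℕ) [Fact p.Prime] [Fact q.Prime]
    (hp : Odd p) (hq : Odd q) (hpq : p < q) :
    let φ : ℝ := (Nat.totient (p ^ 2 * q) : ℝ)
    let A : ℝ := (p : ℝ) ^ 2 * ((p : ℝ) - 1) * ((q : ℝ) - 1)
    let B : ℝ := (p : ℝ) ^ 2 * ((p : ℝ) - 1) * ((q : ℝ) - 1) * ((p : ℝ) + (q : ℝ) - 3)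
    let E : ℝ := ((unitGraph (ZMod (p ^ 2 * q))).edgeFinset.card : ℝ)
    E = (p : ℝ) * ((p : ℝ) - 1) * ((q : ℝ) - 1) * ((p : ℝ) ^ 2 * (q : ℝ) - 1) / 2 ∧
    somborIndex (unitGraph (ZMod (p ^ 2 * q))) =
      Real.sqrt 2 * A * φ + B * Real.sqrt (φ ^ 2 + (φ - 1) ^ 2) +
        Real.sqrt 2 * (E - A - B) * (φ - 1) := by
  intro φ A B E
  haveI := n_ne_zero p q
  obtain ⟨hEc, hA, hB⟩ := counts_main p q hp hq hpq
  refine ⟨hEc, ?_⟩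
  have h2 : IsUnit (2 : ZMod (p ^ 2 * q)) := two_unit p q hp hq
  have hu1 : 1 ≤ uc (p ^ 2 * q) := Finset.card_pos.mpr ⟨1, by simp [mem_filter]⟩
  have hφ : ((uc (p ^ 2 * q) : ℕ) : ℝ) = φ := by
    unfold φ
    rw [uc_eq_totient]
  have hφ1 : (1 : ℝ) ≤ φ := by
    rw [← hφ]; exact_mod_cast hu1
  -- the three sqrt values
  have sqrt0 : Real.sqrt (φ ^ 2 + φ ^ 2) = Real.sqrt 2 * φ := by
    rw [show φ ^ 2 + φ ^ 2 = 2 * φ ^ 2 by ring, Real.sqrt_mul (by norm_num),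
      Real.sqrt_sq (by linarith)]
  have sqrt2 : Real.sqrt ((φ - 1) ^ 2 + (φ - 1) ^ 2) = Real.sqrt 2 * (φ - 1) := by
    rw [show (φ-1) ^ 2 + (φ-1) ^ 2 = 2 * (φ-1) ^ 2 by ring, Real.sqrt_mul (by norm_num),
      Real.sqrt_sq (by linarith)]
  -- degree cast
  have hdeg : ∀ x : ZMod (p ^ 2 * q),
      ((unitGraph (ZMod (p ^ 2 * q))).degree x : ℝ) = if IsUnit x then φ - 1 else φ := by
    intro x
    rw [deg_unitGraph _ h2 x]
    by_cases hx : IsUnit x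
    · rw [if_pos hx, if_pos hx, Nat.cast_sub hu1, Nat.cast_one, hφ]
    · rw [if_neg hx, if_neg hx, hφ]
  set G := unitGraph (ZMod (p ^ 2 * q)) with hG
  set F : Sym2 (ZMod (p ^ 2 * q)) → ℝ :=
    Sym2.lift ⟨fun u v => Real.sqrt ((G.degree u : ℝ) ^ 2 + (G.degree v : ℝ) ^ 2),
      fun u v => by dsimp only; rw [add_comm]⟩ with hF
  have hFval : ∀ x y : ZMod (p ^ 2 * q),
      F s(x, y) = Real.sqrt ((G.degree x : ℝ) ^ 2 + (G.degree y : ℝ) ^ 2) := by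
    intro x y; rw [hF, Sym2.lift_mk]
  have hSO : somborIndex G = ∑ e ∈ G.edgeFinset, F e := rfl
  -- split the edge sum
  set P0 : Sym2 (ZMod (p ^ 2 * q)) → Prop := fun e => ∀ v ∈ e, ¬ IsUnit v with hP0
  set P2 : Sym2 (ZMod (p ^ 2 * q)) → Prop := fun e => ∀ v ∈ e, IsUnit v with hP2
  have split1 : ∑ e ∈ G.edgeFinset, F e
      = ∑ e ∈ G.edgeFinset.filter P0, F e + ∑ e ∈ G.edgeFinset.filter (fun e => ¬ P0 e), F e :=
    (Finset.sum_filter_add_sum_filter_not _ _ _).symm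
  have split2 : ∑ e ∈ G.edgeFinset.filter (fun e => ¬ P0 e), F e
      = ∑ e ∈ G.edgeFinset.filter (fun e => ¬ P0 e ∧ P2 e), F e
        + ∑ e ∈ G.edgeFinset.filter (fun e => ¬ P0 e ∧ ¬ P2 e), F e := by
    rw [← Finset.sum_filter_add_sum_filter_not (G.edgeFinset.filter (fun e => ¬ P0 e)) P2 F,
      Finset.filter_filter, Finset.filter_filter]
  -- evaluate on each class
  have ev0 : ∀ e ∈ G.edgeFinset.filter P0, F e = Real.sqrt 2 * φ := by
    intro e he
    rw [mem_filter] at he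
    obtain ⟨heE, hP⟩ := he
    induction e using Sym2.ind with
    | _ x y =>
      rw [hFval, hdeg, hdeg, if_neg (hP x (by simp)), if_neg (hP y (by simp)), sqrt0]
  have ev2 : ∀ e ∈ G.edgeFinset.filter (fun e => ¬ P0 e ∧ P2 e), F e
      = Real.sqrt 2 * (φ - 1) := by
    intro e he
    rw [mem_filter] at he
    obtain ⟨heE, _, hP⟩ := he
    induction e using Sym2.ind with
    | _ x y =>
      rw [hFval, hdeg, hdeg, if_pos (hP x (by simp)), if_pos (hP y (by simp)), sqrt2]
  have ev1 : ∀ e ∈ G.edgeFinset.filter (fun e => ¬ P0 e ∧ ¬ P2 e), F e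
      = Real.sqrt (φ ^ 2 + (φ - 1) ^ 2) := by
    intro e he
    rw [mem_filter] at he
    obtain ⟨heE, hnP0, hnP2⟩ := he
    induction e using Sym2.ind with
    | _ x y =>
      rw [hP0] at hnP0
      rw [hP2] at hnP2
      simp only [Sym2.mem_iff, not_forall] at hnP0 hnP2
      have hxor : (IsUnit x ∧ ¬ IsUnit y) ∨ (¬ IsUnit x ∧ IsUnit y) := by
        by_cases hx : IsUnit x <;> by_cases hy : IsUnit y
        · exfalso; obtain ⟨v, hv, hnv⟩ := hnP2; rcases hv with rfl | rfl <;> tauto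
        · left; exact ⟨hx, hy⟩
        · right; exact ⟨hx, hy⟩
        · exfalso; obtain ⟨v, hv, hnv⟩ := hnP0; rcases hv with rfl | rfl <;> tauto
      rcases hxor with ⟨hx, hy⟩ | ⟨hx, hy⟩
      · rw [hFval, hdeg, hdeg, if_pos hx, if_neg hy, add_comm ((φ-1)^2)]
      · rw [hFval, hdeg, hdeg, if_neg hx, if_pos hy]
  rw [hSO, split1, split2, Finset.sum_congr rfl ev0, Finset.sum_congr rfl ev2,
    Finset.sum_congr rfl ev1, Finset.sum_const, Finset.sum_const, Finset.sum_const,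
    nsmul_eq_mul, nsmul_eq_mul, nsmul_eq_mul]
  -- cardinalities
  have c1 : (G.edgeFinset.filter P0).card + (G.edgeFinset.filter (fun e => ¬ P0 e)).card
      = G.edgeFinset.card := Finset.card_filter_add_card_filter_not _
  have c2 : (G.edgeFinset.filter (fun e => ¬ P0 e ∧ P2 e)).card
      + (G.edgeFinset.filter (fun e => ¬ P0 e ∧ ¬ P2 e)).card
      = (G.edgeFinset.filter (fun e => ¬ P0 e)).card := by
    rw [← Finset.filter_filter, ← Finset.filter_filter]
    exact Finset.card_filter_add_card_filter_not _
  have hAc : ((G.edgeFinset.filter P0).card : ℝ) = A := hA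
  have hBc : ((G.edgeFinset.filter (fun e => ¬ P0 e ∧ ¬ P2 e)).card : ℝ) = B := hB
  have hc1r : ((G.edgeFinset.filter P0).card : ℝ)
      + ((G.edgeFinset.filter (fun e => ¬ P0 e)).card : ℝ) = E := by
    unfold E; exact_mod_cast c1
  have hc2r : ((G.edgeFinset.filter (fun e => ¬ P0 e ∧ P2 e)).card : ℝ)
      + ((G.edgeFinset.filter (fun e => ¬ P0 e ∧ ¬ P2 e)).card : ℝ)
      = ((G.edgeFinset.filter (fun e => ¬ P0 e)).card : ℝ) := by exact_mod_cast c2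
  have hCc : ((G.edgeFinset.filter (fun e => ¬ P0 e ∧ P2 e)).card : ℝ) = E - A - B := by
    linarith
  rw [hAc, hBc, hCc]
  ring
end

section
/- Let R be a finite commutative local ring with n elements in which 2 is not a unit, and let U(R) denote its set of units. Then the Sombor index of the unit graph of R satisfies SO(G(R)) = n·|U(R)|²/√2. -/
open scoped Classical

lemma unitGraph_degree (R : Type*) [CommRing R] [Fintype R] (h2 : ¬ IsUnit (2 : R)) (x : R) :
    (unitGraph R).degree x = Fintype.card Rˣ := by
  have hnb : (unitGraph R).neighborFinset x
      = Finset.univ.filter (fun y => IsUnit (x + y)) := by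
    ext y
    simp only [SimpleGraph.mem_neighborFinset, Finset.mem_filter, Finset.mem_univ, true_and]
    constructor
    · exact fun h => h.2
    · intro hy
      refine ⟨fun hxy => h2 ?_, hy⟩
      subst hxy
      have : IsUnit (2 * x) := by rwa [two_mul]
      exact isUnit_of_mul_isUnit_left this
  rw [SimpleGraph.degree, hnb, ← Finset.card_univ]
  symm
  apply Finset.card_bij (fun (u : Rˣ) _ => (u : R) - x)
  · intro u _
    simp
  · intro a _ b _ h
    ext
    exact sub_left_injective h
  · intro y hy
    simp only [Finset.mem_filter, Finset.mem_univ, true_and] at hy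
    exact ⟨hy.unit, Finset.mem_univ _, by simp⟩

theorem sombor_unit_graph_local_two_not_unit (R : Type*) [CommRing R] [Fintype R]
    [IsLocalRing R] (h2 : ¬ IsUnit (2 : R)) :
    somborIndex (unitGraph R) =
      (Fintype.card R : ℝ) * (Fintype.card Rˣ : ℝ) ^ 2 / Real.sqrt 2 := by
  set u : ℝ := (Fintype.card Rˣ : ℝ) with hu
  have hu0 : 0 ≤ u := Nat.cast_nonneg _
  have hterm : ∀ e ∈ (unitGraph R).edgeFinset,
      Sym2.lift ⟨fun a b => Real.sqrt (((unitGraph R).degree a : ℝ) ^ 2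
        + ((unitGraph R).degree b : ℝ) ^ 2),
        fun a b => by dsimp only; rw [add_comm]⟩ e = Real.sqrt 2 * u := by
    intro e _
    induction e using Sym2.ind with
    | _ a b =>
      simp only [Sym2.lift_mk, unitGraph_degree R h2]
      rw [← two_mul, Real.sqrt_mul (by norm_num : (0:ℝ) ≤ 2), Real.sqrt_sq hu0]
  have hsum := SimpleGraph.sum_degrees_eq_twice_card_edges (unitGraph R)
  simp only [unitGraph_degree R h2, Finset.sum_const, Finset.card_univ, smul_eq_mul] at hsum
  have hcard : ((unitGraph R).edgeFinset.card : ℝ)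
      = (Fintype.card R : ℝ) * u / 2 := by
    have := congrArg (fun n : ℕ => (n : ℝ)) hsum
    push_cast at this
    linarith
  rw [somborIndex, Finset.sum_congr rfl hterm, Finset.sum_const, nsmul_eq_mul, hcard]
  have h2pos : Real.sqrt 2 > 0 := Real.sqrt_pos.mpr (by norm_num)
  have hs : Real.sqrt 2 * Real.sqrt 2 = 2 := Real.mul_self_sqrt (by norm_num)
  field_simp
  ring_nf
  rw [Real.sq_sqrt (by norm_num : (0:ℝ) ≤ 2)]
end
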